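/- arXiv:2208.04985 — 5 statements merged into one kernel-verified Lean document; each statement's English description precedes it below -/
import Mathlib

section
/- For every δ ∈ (0,1), every maximizer x* ∈ [0,1] of x ↦ Π^D(x,δ) satisfies x* > p₀, where p₀ ∈ (0,1) is the unique maximizer of p ↦ (1−F(p))·(p−μ) (equivalently, the unique solution of ψ(p₀) = μ). -/
open MeasureTheory

/-- `F(x) = ∫₀^x f`, with the convention that it is `0` for `x ≤ 0`. -/
noncomputable def cdf (f : ℝ → ℝ) (x : ℝ) : ℝ := ∫ t in Set.Ioc (0:ℝ) x, f t

/-- `𝒢(x) = ∫₀^x G(y) dy`, the left-hand integral of the cdf of `g` (`= 0` for `x ≤ 0`). -/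
noncomputable def calG (g : ℝ → ℝ) (x : ℝ) : ℝ := ∫ y in Set.Ioc (0:ℝ) x, cdf g y

/-- `μ = ∫₀¹ ω g(ω) dω`, the mean cost. -/
noncomputable def muG (g : ℝ → ℝ) : ℝ := ∫ t in Set.Ioc (0:ℝ) 1, t * g t

/-- The virtual valuation `ψ(θ) = θ − (1 − F(θ))/f(θ)`. -/
noncomputable def psi (f : ℝ → ℝ) (θ : ℝ) : ℝ := θ - (1 - cdf f θ) / f θ

/-- The truncated virtual valuation `ψ(θ,x) = θ − (F(x) − F(θ))/f(θ)`. -/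
noncomputable def psiT (f : ℝ → ℝ) (x θ : ℝ) : ℝ := θ - (cdf f x - cdf f θ) / f θ

/-- The dynamic-mechanism profit
`Π^D(x,δ) = (1−F(x))·(x − δ·∫_{θ**(x)}^x G(ψ(θ,x)) dθ − μ) + δ·∫_{θ**(x)}^x 𝒢(ψ(θ,x)) f(θ) dθ`
for `x ∈ (0,1]`, with `Π^D(0,δ) = −μ`; here `θss` is the map `x ↦ θ**(x)`. -/
noncomputable def PiD (f g : ℝ → ℝ) (θss : ℝ → ℝ) (x δ : ℝ) : ℝ :=
  if x = 0 then -(muG g)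
  else (1 - cdf f x) * (x - δ * (∫ θ in (θss x)..x, cdf g (psiT f x θ)) - muG g)
    + δ * ∫ θ in (θss x)..x, calG g (psiT f x θ) * f θ

/-!
Write `Π^D(x,δ) = (1 - F(x))(x - μ) + δ D(x)` with
`D(x) = ∫₀ˣ [𝒢(ψ(θ,x)) f(θ) - (1 - F(x)) G(ψ(θ,x))] dθ`; the lower limit may be moved from
`θ**(x)` to `0` because `G` and `𝒢` vanish at nonpositive arguments. The static part has
derivative `f(x)(μ - ψ(x))`; raising `x` lowers both `ψ(θ,x)` and `1 - F(x)`, and the convexity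
of `𝒢` shows that the integrand of `D` still increases. Hence `Π^D(x₂,δ) - Π^D(x₁,δ) ≥ ∫_{x₁}^{x₂} s` with
`s = f (μ - ψ) + δ (𝒢 f - (1 - F) G) = (1 - δ) f (μ - ψ) + δ (f (μ - θ + 𝒢) + (1 - F)(1 - G))`,
all evaluated at `θ`.
Since `μ = 1 - 𝒢(1)`, the last expression is positive wherever `ψ ≤ μ`, that is on `[0, p₀]`,
hence by continuity on some `[0, q]` with `q > p₀`. So `Π^D(·,δ)` is strictly increasing on
`(0, q]`, while `Π^D(0,δ) = -μ < Π^D(p₀,δ)`.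
-/

open Set

lemma intervalIntegral_eq_of_eqOn_zero {h : ℝ → ℝ} {a b c : ℝ} (hac : a ≤ c) (hcb : c ≤ b)
    (hh : IntervalIntegrable h volume a b) (hzero : EqOn h 0 (Icc a c)) :
    ∫ θ in c..b, h θ = ∫ θ in a..b, h θ := by
  have hab := hac.trans hcb
  have hac_int : IntervalIntegrable h volume a c := hh.mono_set <| by
    rw [uIcc_of_le hac, uIcc_of_le hab]; exact Icc_subset_Icc le_rfl hcb
  have hcb_int : IntervalIntegrable h volume c b := hh.mono_set <| by
    rw [uIcc_of_le hcb, uIcc_of_le hab]; exact Icc_subset_Icc hac le_rfl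
  rw [← intervalIntegral.integral_add_adjacent_intervals hac_int hcb_int,
    intervalIntegral.integral_congr (a := a) (b := c) (g := fun _ => (0:ℝ))
      (by rwa [uIcc_of_le hac]),
    intervalIntegral.integral_zero, zero_add]

lemma MeasureTheory.IntegrableOn.intervalIntegrable_of_le {f : ℝ → ℝ} {a b c d : ℝ}
    (hf : IntegrableOn f (Icc c d)) (hca : c ≤ a) (hab : a ≤ b) (hbd : b ≤ d) :
    IntervalIntegrable f volume a b :=
  IntegrableOn.intervalIntegrable <| hf.mono_set <| by
    rw [uIcc_of_le hab]; exact Icc_subset_Icc hca hbd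

lemma ContinuousOn.exists_gt_forall_pos {h : ℝ → ℝ} {a b p : ℝ} (hc : ContinuousOn h (Icc a b))
    (hp : p ∈ Ico a b) (hpos : ∀ θ ∈ Icc a p, 0 < h θ) : ∃ q ∈ Ioc p b, ∀ θ ∈ Icc a q, 0 < h θ := by
  have hnhds : Icc a b ∈ nhdsWithin p (Ici p) :=
    Filter.mem_of_superset (Icc_mem_nhdsGE hp.2) (Icc_subset_Icc hp.1 le_rfl)
  have hev : ∀ᶠ θ in nhdsWithin p (Ici p), 0 < h θ :=
    ((hc p (Ico_subset_Icc_self hp)).mono_of_mem_nhdsWithin hnhds).eventually_const_lt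
      (hpos p ⟨hp.1, le_rfl⟩)
  obtain ⟨u, hpu, hu⟩ := mem_nhdsGE_iff_exists_Icc_subset.1 hev
  refine ⟨min u b, ⟨lt_min hpu hp.2, min_le_right _ _⟩, fun θ hθ => ?_⟩
  rcases le_or_gt θ p with hθp | hθp
  · exact hpos θ ⟨hθ.1, hθp⟩
  · exact hu ⟨hθp.le, hθ.2.trans (min_le_left _ _)⟩

section Cdf
variable {f : ℝ → ℝ}

lemma cdf_of_nonpos (f : ℝ → ℝ) {y : ℝ} (hy : y ≤ 0) : cdf f y = 0 := by
  simp [cdf, Ioc_eq_empty (not_lt.mpr hy)]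

lemma cdf_eq_intervalIntegral (f : ℝ → ℝ) {y : ℝ} (hy : 0 ≤ y) :
    cdf f y = ∫ t in (0:ℝ)..y, f t :=
  (intervalIntegral.integral_of_le hy).symm

lemma cdf_sub_cdf (hf : IntegrableOn f (Icc 0 1)) {a b : ℝ} (ha : 0 ≤ a) (hab : a ≤ b)
    (hb : b ≤ 1) : cdf f b - cdf f a = ∫ t in a..b, f t := by
  rw [cdf_eq_intervalIntegral f (ha.trans hab), cdf_eq_intervalIntegral f ha]
  exact intervalIntegral.integral_interval_sub_left
    (hf.intervalIntegrable_of_le le_rfl (ha.trans hab) hb)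
    (hf.intervalIntegrable_of_le le_rfl ha (hab.trans hb))

lemma cdf_nonneg (hf : ∀ t ∈ Icc (0:ℝ) 1, 0 ≤ f t) {y : ℝ} (hy : y ≤ 1) : 0 ≤ cdf f y := by
  rcases le_or_gt y 0 with hy0 | hy0
  · rw [cdf_of_nonpos f hy0]
  · rw [cdf_eq_intervalIntegral f hy0.le]
    exact intervalIntegral.integral_nonneg hy0.le fun t ht => hf t ⟨ht.1, ht.2.trans hy⟩

lemma cdf_mono (hf_int : IntegrableOn f (Icc 0 1)) (hf : ∀ t ∈ Icc (0:ℝ) 1, 0 ≤ f t)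
    {a b : ℝ} (hab : a ≤ b) (hb : b ≤ 1) : cdf f a ≤ cdf f b := by
  rcases le_or_gt a 0 with ha | ha
  · rw [cdf_of_nonpos f ha]
    exact cdf_nonneg hf hb
  · rw [← sub_nonneg, cdf_sub_cdf hf_int ha.le hab hb]
    exact intervalIntegral.integral_nonneg hab fun t ht => hf t ⟨ha.le.trans ht.1, ht.2.trans hb⟩

lemma cdf_le_one (hf_int : IntegrableOn f (Icc 0 1)) (hf : ∀ t ∈ Icc (0:ℝ) 1, 0 ≤ f t)
    (hf_one : cdf f 1 = 1) {y : ℝ} (hy : y ≤ 1) : cdf f y ≤ 1 :=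
  hf_one ▸ cdf_mono hf_int hf hy le_rfl

lemma cdf_lt_one (hf_int : IntegrableOn f (Icc 0 1)) (hf : ∀ t ∈ Icc (0:ℝ) 1, 0 < f t)
    (hf_one : cdf f 1 = 1) {y : ℝ} (hy : y ∈ Ico 0 1) : cdf f y < 1 := by
  rw [← hf_one, ← sub_pos, cdf_sub_cdf hf_int hy.1 hy.2.le le_rfl]
  exact intervalIntegral.intervalIntegral_pos_of_pos_on
    (hf_int.intervalIntegrable_of_le hy.1 hy.2.le le_rfl)
    (fun t ht => hf t ⟨hy.1.trans ht.1.le, ht.2.le⟩) hy.2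

lemma cdf_continuousOn (hf : IntegrableOn f (Icc 0 1)) : ContinuousOn (cdf f) (Icc 0 1) :=
  intervalIntegral.continuousOn_primitive hf

lemma cdf_continuousOn_Iic (hf : IntegrableOn f (Icc 0 1)) : ContinuousOn (cdf f) (Iic 1) := by
  have hmax : ContinuousOn (fun y => cdf f (max 0 y)) (Iic 1) :=
    (cdf_continuousOn hf).comp (continuous_const.max continuous_id).continuousOn
      fun y hy => ⟨le_max_left _ _, max_le zero_le_one hy⟩
  refine hmax.congr fun y _ => ?_
  rcases le_or_gt y 0 with hy | hy
  · simp [max_eq_left hy, cdf_of_nonpos f hy, cdf_of_nonpos f le_rfl]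
  · simp [max_eq_right hy.le]

lemma cdf_hasDerivAt (hf_int : IntegrableOn f (Icc 0 1)) (hf : ContinuousOn f (Icc 0 1))
    {y : ℝ} (hy : y ∈ Ioo (0:ℝ) 1) : HasDerivAt (cdf f) (f y) y := by
  have hprim : HasDerivAt (fun u => ∫ t in (0:ℝ)..u, f t) (f y) y :=
    intervalIntegral.integral_hasDerivAt_right
      (hf_int.intervalIntegrable_of_le le_rfl hy.1.le hy.2.le)
      ((hf.mono Ioo_subset_Icc_self).stronglyMeasurableAtFilter isOpen_Ioo y hy)
      (hf.continuousAt (Icc_mem_nhds hy.1 hy.2))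
  refine hprim.congr_of_eventuallyEq ?_
  filter_upwards [Ioi_mem_nhds hy.1] with u hu
  exact cdf_eq_intervalIntegral f (le_of_lt hu)

end Cdf

section CalG
variable {g : ℝ → ℝ}

lemma calG_of_nonpos (g : ℝ → ℝ) {y : ℝ} (hy : y ≤ 0) : calG g y = 0 :=
  cdf_of_nonpos _ hy

lemma calG_nonneg (hg : ∀ t ∈ Icc (0:ℝ) 1, 0 ≤ g t) {y : ℝ} (hy : y ≤ 1) : 0 ≤ calG g y :=
  cdf_nonneg (fun _ ht => cdf_nonneg hg ht.2) hy

lemma calG_continuousOn_Iic (hg : IntegrableOn g (Icc 0 1)) : ContinuousOn (calG g) (Iic 1) :=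
  cdf_continuousOn_Iic (cdf_continuousOn hg).integrableOn_Icc

lemma calG_sub_calG_le (hg_int : IntegrableOn g (Icc 0 1)) (hg : ∀ t ∈ Icc (0:ℝ) 1, 0 ≤ g t)
    {u v : ℝ} (hu : 0 ≤ u) (huv : u ≤ v) (hv : v ≤ 1) :
    calG g v - calG g u ≤ (v - u) * cdf g v := by
  change cdf (cdf g) v - cdf (cdf g) u ≤ _
  rw [cdf_sub_cdf (cdf_continuousOn hg_int).integrableOn_Icc hu huv hv]
  simpa using intervalIntegral.integral_mono_on huv
    ((cdf_continuousOn hg_int).integrableOn_Icc.intervalIntegrable_of_le hu huv hv)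
    intervalIntegrable_const fun y hy => cdf_mono hg_int hg hy.2 hv

/-- `𝒢` is convex with slope `G`; this is its tangent line inequality at `v`. -/
lemma calG_sub_mul_cdf_le (hg_int : IntegrableOn g (Icc 0 1))
    (hg : ∀ t ∈ Icc (0:ℝ) 1, 0 ≤ g t) {u v : ℝ} (huv : u ≤ v) (hv : v ≤ 1) :
    calG g v - (v - u) * cdf g v ≤ calG g u := by
  rcases le_or_gt u 0 with hu | hu
  · rcases le_or_gt v 0 with hv0 | hv0
    · simp [calG_of_nonpos g hv0, calG_of_nonpos g hu, cdf_of_nonpos g hv0]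
    · have hG := cdf_nonneg hg hv
      have h0 := calG_sub_calG_le hg_int hg le_rfl hv0.le hv
      rw [calG_of_nonpos g le_rfl] at h0
      rw [calG_of_nonpos g hu]
      nlinarith
  · linarith [calG_sub_calG_le hg_int hg hu.le huv hv]

lemma muG_nonneg (hg : ∀ t ∈ Icc (0:ℝ) 1, 0 ≤ g t) : 0 ≤ muG g :=
  setIntegral_nonneg measurableSet_Ioc fun t ht =>
    mul_nonneg ht.1.le (hg t ⟨ht.1.le, ht.2⟩)

/-- Integration by parts: `μ = ∫₀¹ ω g(ω) dω = [ω G(ω)]₀¹ - ∫₀¹ G`. -/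
lemma muG_eq_one_sub_calG (hg_int : IntegrableOn g (Icc 0 1)) (hg : ContinuousOn g (Icc 0 1))
    (hg_one : cdf g 1 = 1) : muG g = 1 - calG g 1 := by
  have hG_int : IntervalIntegrable (cdf g) volume 0 1 :=
    (cdf_continuousOn hg_int).intervalIntegrable_of_Icc zero_le_one
  have hmul_int : IntervalIntegrable (fun t => t * g t) volume 0 1 :=
    (hg_int.intervalIntegrable_of_le le_rfl zero_le_one le_rfl).continuousOn_mul continuousOn_id
  have hftc : ∫ t in (0:ℝ)..1, (cdf g t + t * g t) = 1 * cdf g 1 - 0 * cdf g 0 :=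
    intervalIntegral.integral_eq_sub_of_hasDeriv_right_of_le zero_le_one
      (continuousOn_id.mul (cdf_continuousOn hg_int))
      (fun t ht => by
        simpa [add_comm, mul_comm] using
          ((hasDerivAt_id t).mul (cdf_hasDerivAt hg_int hg ht)).hasDerivWithinAt)
      (hG_int.add hmul_int)
  rw [intervalIntegral.integral_add hG_int hmul_int, ← cdf_eq_intervalIntegral _ zero_le_one,
    ← cdf_eq_intervalIntegral (fun t => t * g t) zero_le_one, hg_one] at hftc
  change cdf (fun t => t * g t) 1 = 1 - cdf (cdf g) 1
  linarith

end CalG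

section VirtualValuation
variable {f : ℝ → ℝ}

lemma psiT_self (f : ℝ → ℝ) (θ : ℝ) : psiT f θ θ = θ := by
  simp [psiT]

lemma psiT_one (hf_one : cdf f 1 = 1) : psiT f 1 = psi f := by
  funext θ
  simp [psiT, psi, hf_one]

lemma psiT_continuousOn (hf_int : IntegrableOn f (Icc 0 1)) (hf_cont : ContinuousOn f (Icc 0 1))
    (hf_pos : ∀ t ∈ Icc (0:ℝ) 1, 0 < f t) (x : ℝ) : ContinuousOn (psiT f x) (Icc 0 1) :=
  continuousOn_id.sub ((continuousOn_const.sub (cdf_continuousOn hf_int)).div hf_cont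
    fun θ hθ => (hf_pos θ hθ).ne')

lemma psiT_le_self (hf_int : IntegrableOn f (Icc 0 1)) (hf : ∀ t ∈ Icc (0:ℝ) 1, 0 ≤ f t)
    {x θ : ℝ} (hθ : θ ∈ Icc 0 x) (hx : x ≤ 1) : psiT f x θ ≤ θ := by
  have hF : cdf f θ ≤ cdf f x := cdf_mono hf_int hf hθ.2 hx
  have : 0 ≤ (cdf f x - cdf f θ) / f θ :=
    div_nonneg (sub_nonneg.mpr hF) (hf θ ⟨hθ.1, hθ.2.trans hx⟩)
  rw [psiT]
  linarith

lemma psiT_le_psiT_of_le (hf_int : IntegrableOn f (Icc 0 1)) (hf : ∀ t ∈ Icc (0:ℝ) 1, 0 ≤ f t)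
    {x₁ x₂ θ : ℝ} (hθ : θ ∈ Icc 0 1) (h12 : x₁ ≤ x₂) (hx₂ : x₂ ≤ 1) :
    psiT f x₂ θ ≤ psiT f x₁ θ := by
  have hF : cdf f x₁ ≤ cdf f x₂ := cdf_mono hf_int hf h12 hx₂
  have : (cdf f x₁ - cdf f θ) / f θ ≤ (cdf f x₂ - cdf f θ) / f θ :=
    div_le_div_of_nonneg_right (by linarith) (hf θ hθ)
  simp only [psiT]
  linarith

lemma mul_psiT_sub_psiT {θ : ℝ} (hfθ : f θ ≠ 0) (x₁ x₂ : ℝ) :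
    f θ * (psiT f x₁ θ - psiT f x₂ θ) = cdf f x₂ - cdf f x₁ := by
  simp only [psiT]
  field_simp
  ring

lemma mul_sub_psi {θ : ℝ} (hfθ : f θ ≠ 0) (μ : ℝ) :
    f θ * (μ - psi f θ) = f θ * (μ - θ) + (1 - cdf f θ) := by
  simp only [psi]
  field_simp
  ring

lemma continuousOn_comp_psiT {h : ℝ → ℝ} (hh : ContinuousOn h (Iic 1))
    (hf_int : IntegrableOn f (Icc 0 1)) (hf_cont : ContinuousOn f (Icc 0 1))
    (hf_pos : ∀ t ∈ Icc (0:ℝ) 1, 0 < f t) {x : ℝ} (hx : x ≤ 1) :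
    ContinuousOn (fun θ => h (psiT f x θ)) (Icc 0 x) :=
  hh.comp ((psiT_continuousOn hf_int hf_cont hf_pos x).mono (Icc_subset_Icc le_rfl hx))
    fun _ hθ => (psiT_le_self hf_int (fun t ht => (hf_pos t ht).le) hθ hx).trans (hθ.2.trans hx)

end VirtualValuation

noncomputable def dynIntegrand (f g : ℝ → ℝ) (x θ : ℝ) : ℝ :=
  calG g (psiT f x θ) * f θ - (1 - cdf f x) * cdf g (psiT f x θ)

section Dynamic
variable {f g : ℝ → ℝ}

lemma dynIntegrand_self (f g : ℝ → ℝ) (θ : ℝ) :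
    dynIntegrand f g θ θ = calG g θ * f θ - (1 - cdf f θ) * cdf g θ := by
  rw [dynIntegrand, psiT_self]

lemma dynIntegrand_of_psiT_nonpos {x θ : ℝ} (hψ : psiT f x θ ≤ 0) : dynIntegrand f g x θ = 0 := by
  simp [dynIntegrand, calG_of_nonpos g hψ, cdf_of_nonpos g hψ]

lemma neg_le_dynIntegrand (hf_int : IntegrableOn f (Icc 0 1)) (hf_pos : ∀ t ∈ Icc (0:ℝ) 1, 0 < f t)
    (hf_one : cdf f 1 = 1) (hg_int : IntegrableOn g (Icc 0 1)) (hg : ∀ t ∈ Icc (0:ℝ) 1, 0 ≤ g t)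
    (hg_one : cdf g 1 = 1) {x θ : ℝ} (hθ : θ ∈ Icc 0 x) (hx : x ≤ 1) :
    -(1 - cdf f x) ≤ dynIntegrand f g x θ := by
  have hf : ∀ t ∈ Icc (0:ℝ) 1, 0 ≤ f t := fun t ht => (hf_pos t ht).le
  have hψ : psiT f x θ ≤ 1 := (psiT_le_self hf_int hf hθ hx).trans (hθ.2.trans hx)
  have h𝒢 := mul_nonneg (calG_nonneg hg hψ) (hf θ ⟨hθ.1, hθ.2.trans hx⟩)
  have hG := mul_le_mul_of_nonneg_left (cdf_le_one hg_int hg hg_one hψ)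
    (sub_nonneg.mpr (cdf_le_one hf_int hf hf_one hx))
  rw [dynIntegrand]
  linarith

lemma dynIntegrand_continuousOn (hf_int : IntegrableOn f (Icc 0 1))
    (hf_cont : ContinuousOn f (Icc 0 1)) (hf_pos : ∀ t ∈ Icc (0:ℝ) 1, 0 < f t)
    (hg_int : IntegrableOn g (Icc 0 1)) {x : ℝ} (hx : x ≤ 1) :
    ContinuousOn (dynIntegrand f g x) (Icc 0 x) :=
  ((continuousOn_comp_psiT (calG_continuousOn_Iic hg_int) hf_int hf_cont hf_pos hx).mul
    (hf_cont.mono (Icc_subset_Icc le_rfl hx))).sub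
    (continuousOn_const.mul (continuousOn_comp_psiT (cdf_continuousOn_Iic hg_int) hf_int hf_cont
      hf_pos hx))

lemma dynIntegrand_self_continuousOn (hf_int : IntegrableOn f (Icc 0 1))
    (hf_cont : ContinuousOn f (Icc 0 1)) (hg_int : IntegrableOn g (Icc 0 1)) :
    ContinuousOn (fun θ => dynIntegrand f g θ θ) (Icc 0 1) := by
  simp only [dynIntegrand_self]
  exact (((calG_continuousOn_Iic hg_int).mono fun _ ht => ht.2).mul hf_cont).sub
    ((continuousOn_const.sub (cdf_continuousOn hf_int)).mul (cdf_continuousOn hg_int))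

/-- Raising the cutoff from `x₁` to `x₂` lowers `ψ(θ,·)` by `(F(x₂) - F(x₁))/f(θ)`; by convexity
of `𝒢` this costs at most `(F(x₂) - F(x₁)) G(ψ(θ,x₁))` in the first term, which the second term
gains back. -/
lemma dynIntegrand_le_dynIntegrand (hf_int : IntegrableOn f (Icc 0 1))
    (hf_pos : ∀ t ∈ Icc (0:ℝ) 1, 0 < f t) (hf_one : cdf f 1 = 1)
    (hg_int : IntegrableOn g (Icc 0 1)) (hg : ∀ t ∈ Icc (0:ℝ) 1, 0 ≤ g t)
    {x₁ x₂ θ : ℝ} (hθ : θ ∈ Icc 0 x₁) (h12 : x₁ ≤ x₂) (hx₂ : x₂ ≤ 1) :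
    dynIntegrand f g x₁ θ ≤ dynIntegrand f g x₂ θ := by
  have hf : ∀ t ∈ Icc (0:ℝ) 1, 0 ≤ f t := fun t ht => (hf_pos t ht).le
  have hθ1 : θ ∈ Icc (0:ℝ) 1 := ⟨hθ.1, hθ.2.trans (h12.trans hx₂)⟩
  have hfθ : 0 < f θ := hf_pos θ hθ1
  have hψ₂₁ : psiT f x₂ θ ≤ psiT f x₁ θ := psiT_le_psiT_of_le hf_int hf hθ1 h12 hx₂
  have hψ₁ : psiT f x₁ θ ≤ 1 := (psiT_le_self hf_int hf hθ (h12.trans hx₂)).trans hθ1.2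
  have htangent := mul_le_mul_of_nonneg_right
    (calG_sub_mul_cdf_le hg_int hg hψ₂₁ hψ₁) hfθ.le
  have hgap : f θ * (psiT f x₁ θ - psiT f x₂ θ) * cdf g (psiT f x₁ θ)
      = (cdf f x₂ - cdf f x₁) * cdf g (psiT f x₁ θ) := by
    rw [mul_psiT_sub_psiT hfθ.ne']
  have hG := mul_le_mul_of_nonneg_left (cdf_mono hg_int hg hψ₂₁ hψ₁)
    (sub_nonneg.mpr (cdf_le_one hf_int hf hf_one hx₂))
  rw [dynIntegrand, dynIntegrand]
  nlinarith

lemma integral_dynIntegrand_self_le (hf_int : IntegrableOn f (Icc 0 1))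
    (hf_cont : ContinuousOn f (Icc 0 1)) (hf_pos : ∀ t ∈ Icc (0:ℝ) 1, 0 < f t)
    (hf_one : cdf f 1 = 1) (hg_int : IntegrableOn g (Icc 0 1))
    (hg : ∀ t ∈ Icc (0:ℝ) 1, 0 ≤ g t) {x₁ x₂ : ℝ} (hx₁ : 0 ≤ x₁) (h12 : x₁ ≤ x₂) (hx₂ : x₂ ≤ 1) :
    ∫ θ in x₁..x₂, dynIntegrand f g θ θ
      ≤ (∫ θ in (0:ℝ)..x₂, dynIntegrand f g x₂ θ) - ∫ θ in (0:ℝ)..x₁, dynIntegrand f g x₁ θ := by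
  have hcont₂ := dynIntegrand_continuousOn (g := g) hf_int hf_cont hf_pos hg_int hx₂
  have hleft : ∫ θ in (0:ℝ)..x₁, dynIntegrand f g x₁ θ ≤ ∫ θ in (0:ℝ)..x₁, dynIntegrand f g x₂ θ :=
    intervalIntegral.integral_mono_on hx₁
      ((dynIntegrand_continuousOn hf_int hf_cont hf_pos hg_int
        (h12.trans hx₂)).intervalIntegrable_of_Icc hx₁)
      ((hcont₂.mono (Icc_subset_Icc le_rfl h12)).intervalIntegrable_of_Icc hx₁)
      fun θ hθ => dynIntegrand_le_dynIntegrand hf_int hf_pos hf_one hg_int hg hθ h12 hx₂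
  have hright : ∫ θ in x₁..x₂, dynIntegrand f g θ θ ≤ ∫ θ in x₁..x₂, dynIntegrand f g x₂ θ :=
    intervalIntegral.integral_mono_on h12
      (((dynIntegrand_self_continuousOn hf_int hf_cont hg_int).mono
        (Icc_subset_Icc hx₁ hx₂)).intervalIntegrable_of_Icc h12)
      ((hcont₂.mono (Icc_subset_Icc hx₁ le_rfl)).intervalIntegrable_of_Icc h12)
      fun θ hθ => dynIntegrand_le_dynIntegrand hf_int hf_pos hf_one hg_int hg
        ⟨hx₁.trans hθ.1, le_rfl⟩ hθ.2 hx₂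
  rw [← intervalIntegral.integral_add_adjacent_intervals
    ((hcont₂.mono (Icc_subset_Icc le_rfl h12)).intervalIntegrable_of_Icc hx₁)
    ((hcont₂.mono (Icc_subset_Icc hx₁ le_rfl)).intervalIntegrable_of_Icc h12)]
  linarith

lemma PiD_zero (f g θss : ℝ → ℝ) (δ : ℝ) : PiD f g θss 0 δ = -muG g :=
  if_pos rfl

/-- Below `θ**(x)` the truncated virtual valuation is nonpositive, where `G` and `𝒢` vanish, so
the integrals defining `Π^D` may start at `0`. -/
lemma PiD_eq (hf_int : IntegrableOn f (Icc 0 1)) (hf_cont : ContinuousOn f (Icc 0 1))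
    (hf_pos : ∀ t ∈ Icc (0:ℝ) 1, 0 < f t) (hg_int : IntegrableOn g (Icc 0 1))
    {θss : ℝ → ℝ} {x : ℝ} (hx : x ∈ Ioc 0 1) (hθss : θss x ∈ Icc 0 x)
    (hroot : psiT f x (θss x) = 0) (hmono : MonotoneOn (psiT f x) (Icc 0 x)) (δ : ℝ) :
    PiD f g θss x δ = (1 - cdf f x) * (x - muG g) + δ * ∫ θ in (0:ℝ)..x, dynIntegrand f g x θ := by
  have hcomp : ∀ {h : ℝ → ℝ}, ContinuousOn h (Iic 1) →
      ContinuousOn (fun θ => h (psiT f x θ)) (Icc (θss x) x) := fun hh =>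
    (continuousOn_comp_psiT hh hf_int hf_cont hf_pos hx.2).mono (Icc_subset_Icc hθss.1 le_rfl)
  have h𝒢 : IntervalIntegrable (fun θ => calG g (psiT f x θ) * f θ) volume (θss x) x :=
    ((hcomp (calG_continuousOn_Iic hg_int)).mul
      (hf_cont.mono (Icc_subset_Icc hθss.1 hx.2))).intervalIntegrable_of_Icc hθss.2
  have hG : IntervalIntegrable (fun θ => cdf g (psiT f x θ)) volume (θss x) x :=
    (hcomp (cdf_continuousOn_Iic hg_int)).intervalIntegrable_of_Icc hθss.2
  have hsplit : ∫ θ in (θss x)..x, dynIntegrand f g x θ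
      = (∫ θ in (θss x)..x, calG g (psiT f x θ) * f θ)
        - (1 - cdf f x) * ∫ θ in (θss x)..x, cdf g (psiT f x θ) := by
    rw [← intervalIntegral.integral_const_mul, ← intervalIntegral.integral_sub h𝒢 (hG.const_mul _)]
    rfl
  have hzero : ∫ θ in (θss x)..x, dynIntegrand f g x θ = ∫ θ in (0:ℝ)..x, dynIntegrand f g x θ :=
    intervalIntegral_eq_of_eqOn_zero hθss.1 hθss.2
      ((dynIntegrand_continuousOn hf_int hf_cont hf_pos hg_int hx.2).intervalIntegrable_of_Icc
        hx.1.le)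
      fun θ hθ => dynIntegrand_of_psiT_nonpos
        (hroot ▸ hmono ⟨hθ.1, hθ.2.trans hθss.2⟩ hθss hθ.2)
  rw [PiD, if_neg hx.1.ne', ← hzero, hsplit]
  ring

end Dynamic

section Profit
variable {f g : ℝ → ℝ}

lemma psi_continuousOn (hf_int : IntegrableOn f (Icc 0 1)) (hf_cont : ContinuousOn f (Icc 0 1))
    (hf_pos : ∀ t ∈ Icc (0:ℝ) 1, 0 < f t) (hf_one : cdf f 1 = 1) :
    ContinuousOn (psi f) (Icc 0 1) :=
  psiT_one hf_one ▸ psiT_continuousOn hf_int hf_cont hf_pos 1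

lemma sub_staticProfit_eq_integral (hf_int : IntegrableOn f (Icc 0 1))
    (hf_cont : ContinuousOn f (Icc 0 1)) (hf_pos : ∀ t ∈ Icc (0:ℝ) 1, 0 < f t)
    {a b : ℝ} (ha : 0 ≤ a) (hab : a ≤ b) (hb : b ≤ 1) (μ : ℝ) :
    (1 - cdf f b) * (b - μ) - (1 - cdf f a) * (a - μ) = ∫ θ in a..b, f θ * (μ - psi f θ) := by
  have hsub : Icc a b ⊆ Icc (0:ℝ) 1 := Icc_subset_Icc ha hb
  rw [intervalIntegral.integral_congr (g := fun θ => f θ * (μ - θ) + (1 - cdf f θ))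
    fun θ hθ => mul_sub_psi (hf_pos θ (hsub (by rwa [uIcc_of_le hab] at hθ))).ne' μ]
  refine (intervalIntegral.integral_eq_sub_of_hasDeriv_right_of_le
    (f := fun y => (1 - cdf f y) * (y - μ)) hab ?_ (fun θ hθ => ?_) ?_).symm
  · exact (continuousOn_const.sub ((cdf_continuousOn hf_int).mono hsub)).mul
      (continuousOn_id.sub continuousOn_const)
  · have hcdf := cdf_hasDerivAt hf_int hf_cont ⟨ha.trans_lt hθ.1, hθ.2.trans_le hb⟩
    have hderiv : HasDerivAt (fun y => (1 - cdf f y) * (y - μ))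
        (-f θ * (θ - μ) + (1 - cdf f θ) * 1) θ :=
      (hcdf.const_sub 1).mul ((hasDerivAt_id' θ).sub_const μ)
    convert hderiv.hasDerivWithinAt using 1
    ring
  · exact (((hf_cont.mono hsub).mul (continuousOn_const.sub continuousOn_id)).add
      (continuousOn_const.sub ((cdf_continuousOn hf_int).mono hsub))).intervalIntegrable_of_Icc hab

/-- A lower bound for the slope of `x ↦ Π^D(x,δ)` at `x = θ`. -/
noncomputable def profitSlope (f g : ℝ → ℝ) (δ θ : ℝ) : ℝ :=
  f θ * (muG g - psi f θ) + δ * dynIntegrand f g θ θ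

lemma profitSlope_continuousOn (hf_int : IntegrableOn f (Icc 0 1))
    (hf_cont : ContinuousOn f (Icc 0 1)) (hf_pos : ∀ t ∈ Icc (0:ℝ) 1, 0 < f t)
    (hf_one : cdf f 1 = 1) (hg_int : IntegrableOn g (Icc 0 1)) (δ : ℝ) :
    ContinuousOn (profitSlope f g δ) (Icc 0 1) :=
  (hf_cont.mul (continuousOn_const.sub (psi_continuousOn hf_int hf_cont hf_pos hf_one))).add
    (continuousOn_const.mul (dynIntegrand_self_continuousOn hf_int hf_cont hg_int))

lemma PiD_add_integral_profitSlope_le (hf_int : IntegrableOn f (Icc 0 1))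
    (hf_cont : ContinuousOn f (Icc 0 1)) (hf_pos : ∀ t ∈ Icc (0:ℝ) 1, 0 < f t)
    (hf_one : cdf f 1 = 1) (hg_int : IntegrableOn g (Icc 0 1))
    (hg : ∀ t ∈ Icc (0:ℝ) 1, 0 ≤ g t) {θss : ℝ → ℝ}
    (hθss : ∀ x ∈ Ioc (0:ℝ) 1, θss x ∈ Icc 0 x ∧ psiT f x (θss x) = 0)
    (hmono : ∀ x ∈ Ioc (0:ℝ) 1, MonotoneOn (psiT f x) (Icc 0 x))
    {δ x₁ x₂ : ℝ} (hδ : 0 ≤ δ) (hx₁ : 0 < x₁) (h12 : x₁ ≤ x₂) (hx₂ : x₂ ≤ 1) :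
    PiD f g θss x₁ δ + ∫ θ in x₁..x₂, profitSlope f g δ θ ≤ PiD f g θss x₂ δ := by
  have hsub : Icc x₁ x₂ ⊆ Icc (0:ℝ) 1 := Icc_subset_Icc hx₁.le hx₂
  have hPiD : ∀ x ∈ Ioc (0:ℝ) 1, PiD f g θss x δ
      = (1 - cdf f x) * (x - muG g) + δ * ∫ θ in (0:ℝ)..x, dynIntegrand f g x θ := fun x hx =>
    PiD_eq hf_int hf_cont hf_pos hg_int hx (hθss x hx).1 (hθss x hx).2 (hmono x hx) δ
  have hstatic : IntervalIntegrable (fun θ => f θ * (muG g - psi f θ)) volume x₁ x₂ :=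
    ((hf_cont.mono hsub).mul (continuousOn_const.sub
      ((psi_continuousOn hf_int hf_cont hf_pos hf_one).mono hsub))).intervalIntegrable_of_Icc h12
  have hdyn : IntervalIntegrable (fun θ => dynIntegrand f g θ θ) volume x₁ x₂ :=
    ((dynIntegrand_self_continuousOn hf_int hf_cont hg_int).mono hsub).intervalIntegrable_of_Icc h12
  have hgain := mul_le_mul_of_nonneg_left
    (integral_dynIntegrand_self_le hf_int hf_cont hf_pos hf_one hg_int hg hx₁.le h12 hx₂) hδ
  simp only [profitSlope]
  rw [hPiD x₁ ⟨hx₁, h12.trans hx₂⟩, hPiD x₂ ⟨hx₁.trans_le h12, hx₂⟩,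
    intervalIntegral.integral_add hstatic (hdyn.const_mul δ), intervalIntegral.integral_const_mul,
    ← sub_staticProfit_eq_integral hf_int hf_cont hf_pos hx₁.le h12 hx₂]
  linarith

lemma profitSlope_pos (hf_int : IntegrableOn f (Icc 0 1)) (hf_pos : ∀ t ∈ Icc (0:ℝ) 1, 0 < f t)
    (hf_one : cdf f 1 = 1) (hg_int : IntegrableOn g (Icc 0 1)) (hg_cont : ContinuousOn g (Icc 0 1))
    (hg_pos : ∀ t ∈ Icc (0:ℝ) 1, 0 < g t) (hg_one : cdf g 1 = 1) {δ θ : ℝ} (hδ : δ ∈ Ioc 0 1)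
    (hθ : θ ∈ Ico 0 1) (hψ : psi f θ ≤ muG g) : 0 < profitSlope f g δ θ := by
  have hfθ : 0 < f θ := hf_pos θ (Ico_subset_Icc_self hθ)
  have hexpand : profitSlope f g δ θ = (1 - δ) * (f θ * (muG g - psi f θ))
      + δ * (f θ * (muG g - θ + calG g θ) + (1 - cdf f θ) * (1 - cdf g θ)) := by
    rw [profitSlope, dynIntegrand_self]
    linear_combination δ * mul_sub_psi hfθ.ne' (muG g)
  have hmean : 0 ≤ muG g - θ + calG g θ := by
    have h := calG_sub_calG_le hg_int (fun t ht => (hg_pos t ht).le) hθ.1 hθ.2.le le_rfl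
    rw [hg_one] at h
    linarith [muG_eq_one_sub_calG hg_int hg_cont hg_one]
  have hF := cdf_lt_one hf_int hf_pos hf_one hθ
  have hG := cdf_lt_one hg_int hg_pos hg_one hθ
  rw [hexpand]
  exact add_pos_of_nonneg_of_pos
    (mul_nonneg (sub_nonneg.mpr hδ.2) (mul_nonneg hfθ.le (sub_nonneg.mpr hψ)))
    (mul_pos hδ.1 (add_pos_of_nonneg_of_pos (mul_nonneg hfθ.le hmean)
      (mul_pos (sub_pos.mpr hF) (sub_pos.mpr hG))))

lemma neg_muG_lt_PiD (hf_int : IntegrableOn f (Icc 0 1)) (hf_cont : ContinuousOn f (Icc 0 1))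
    (hf_pos : ∀ t ∈ Icc (0:ℝ) 1, 0 < f t) (hf_one : cdf f 1 = 1)
    (hg_int : IntegrableOn g (Icc 0 1)) (hg : ∀ t ∈ Icc (0:ℝ) 1, 0 ≤ g t) (hg_one : cdf g 1 = 1)
    {θss : ℝ → ℝ} {x δ : ℝ} (hx : x ∈ Ioo 0 1) (hθss : θss x ∈ Icc 0 x)
    (hroot : psiT f x (θss x) = 0) (hmono : MonotoneOn (psiT f x) (Icc 0 x)) (hδ : δ ∈ Ico 0 1) :
    -muG g < PiD f g θss x δ := by
  have hdyn : x * -(1 - cdf f x) ≤ ∫ θ in (0:ℝ)..x, dynIntegrand f g x θ := by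
    have h := intervalIntegral.integral_mono_on (μ := volume) hx.1.le intervalIntegrable_const
      ((dynIntegrand_continuousOn hf_int hf_cont hf_pos hg_int hx.2.le).intervalIntegrable_of_Icc
        hx.1.le)
      fun θ hθ => neg_le_dynIntegrand hf_int hf_pos hf_one hg_int hg hg_one hθ hx.2.le
    rwa [intervalIntegral.integral_const, smul_eq_mul, sub_zero] at h
  have hF := cdf_lt_one hf_int hf_pos hf_one ⟨hx.1.le, hx.2⟩
  have hF₀ := cdf_nonneg (fun t ht => (hf_pos t ht).le) hx.2.le
  have hgain : 0 < (1 - δ) * (1 - cdf f x) * x :=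
    mul_pos (mul_pos (sub_pos.mpr hδ.2) (sub_pos.mpr hF)) hx.1
  rw [PiD_eq hf_int hf_cont hf_pos hg_int ⟨hx.1, hx.2.le⟩ hθss hroot hmono]
  nlinarith [mul_le_mul_of_nonneg_left hdyn hδ.1, mul_nonneg (muG_nonneg hg) hF₀]

lemma PiD_lt_PiD (hf_int : IntegrableOn f (Icc 0 1))
    (hf_cont : ContinuousOn f (Icc 0 1)) (hf_pos : ∀ t ∈ Icc (0:ℝ) 1, 0 < f t)
    (hf_one : cdf f 1 = 1) (hg_int : IntegrableOn g (Icc 0 1))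
    (hg : ∀ t ∈ Icc (0:ℝ) 1, 0 ≤ g t) {θss : ℝ → ℝ}
    (hθss : ∀ x ∈ Ioc (0:ℝ) 1, θss x ∈ Icc 0 x ∧ psiT f x (θss x) = 0)
    (hmono : ∀ x ∈ Ioc (0:ℝ) 1, MonotoneOn (psiT f x) (Icc 0 x))
    {δ x₁ x₂ : ℝ} (hδ : 0 ≤ δ) (hx₁ : 0 < x₁) (h12 : x₁ < x₂) (hx₂ : x₂ ≤ 1)
    (hslope : ∀ θ ∈ Icc x₁ x₂, 0 < profitSlope f g δ θ) :
    PiD f g θss x₁ δ < PiD f g θss x₂ δ := by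
  have hint : 0 < ∫ θ in x₁..x₂, profitSlope f g δ θ :=
    intervalIntegral.intervalIntegral_pos_of_pos_on
      (((profitSlope_continuousOn hf_int hf_cont hf_pos hf_one hg_int δ).mono
        (Icc_subset_Icc hx₁.le hx₂)).intervalIntegrable_of_Icc h12.le)
      (fun θ hθ => hslope θ (Ioo_subset_Icc_self hθ)) h12
  linarith [PiD_add_integral_profitSlope_le hf_int hf_cont hf_pos hf_one hg_int hg hθss hmono hδ
    hx₁ h12.le hx₂]

end Profit

theorem stmt10_general
    (f g : ℝ → ℝ)
    (hf_int : IntegrableOn f (Set.Icc 0 1))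
    (hg_int : IntegrableOn g (Set.Icc 0 1))
    (hf_one : cdf f 1 = 1)
    (hg_one : cdf g 1 = 1)
    (hg_cont : ContinuousOn g (Set.Icc 0 1))
    (hg_pos : ∀ t ∈ Set.Icc (0:ℝ) 1, 0 < g t)
    (hf_pos : ∀ t ∈ Set.Icc (0:ℝ) 1, 0 < f t)
    (fd : ℝ → ℝ)
    (hf_deriv : ∀ t ∈ Set.Icc (0:ℝ) 1, HasDerivWithinAt f (fd t) (Set.Icc 0 1) t)
    (hpsi_mono : StrictMonoOn (psi f) (Set.Icc 0 1))
    (hpsiT_deriv : ∀ x ∈ Set.Ioc (0:ℝ) 1, ∃ d : ℝ → ℝ, ContinuousOn d (Set.Icc 0 x) ∧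
      ∀ θ ∈ Set.Icc (0:ℝ) x, 0 < d θ ∧ HasDerivWithinAt (psiT f x) (d θ) (Set.Icc 0 x) θ)
    (θss : ℝ → ℝ)
    (hθss : ∀ x ∈ Set.Ioc (0:ℝ) 1, θss x ∈ Set.Ioo 0 x ∧ psiT f x (θss x) = 0)
    (p₀ : ℝ) (hp₀ : p₀ ∈ Set.Ioo (0:ℝ) 1) (hp₀psi : psi f p₀ = muG g) :
    ∀ δ ∈ Set.Ioo (0:ℝ) 1, ∀ xs ∈ Set.Icc (0:ℝ) 1,
      (∀ x ∈ Set.Icc (0:ℝ) 1, PiD f g θss x δ ≤ PiD f g θss xs δ) →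
      p₀ < xs := by
  intro δ hδ xs hxs hmax
  have hf_cont : ContinuousOn f (Icc 0 1) := fun t ht => (hf_deriv t ht).continuousWithinAt
  have hg : ∀ t ∈ Icc (0:ℝ) 1, 0 ≤ g t := fun t ht => (hg_pos t ht).le
  have hroots : ∀ x ∈ Ioc (0:ℝ) 1, θss x ∈ Icc 0 x ∧ psiT f x (θss x) = 0 := fun x hx =>
    ⟨Ioo_subset_Icc_self (hθss x hx).1, (hθss x hx).2⟩
  have hmono : ∀ x ∈ Ioc (0:ℝ) 1, MonotoneOn (psiT f x) (Icc 0 x) := fun x hx => by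
    obtain ⟨d, -, hd⟩ := hpsiT_deriv x hx
    exact monotoneOn_of_hasDerivWithinAt_nonneg (convex_Icc 0 x)
      (fun θ hθ => (hd θ hθ).2.continuousWithinAt)
      (fun θ hθ => (hd θ (interior_subset hθ)).2.mono interior_subset)
      (fun θ hθ => (hd θ (interior_subset hθ)).1.le)
  have hp₀01 : p₀ ∈ Icc (0:ℝ) 1 := Ioo_subset_Icc_self hp₀
  obtain ⟨q, hq, hslope⟩ := (profitSlope_continuousOn hf_int hf_cont hf_pos hf_one hg_int δ
    ).exists_gt_forall_pos ⟨hp₀.1.le, hp₀.2⟩ fun θ hθ =>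
      profitSlope_pos hf_int hf_pos hf_one hg_int hg_cont hg_pos hg_one ⟨hδ.1, hδ.2.le⟩
        ⟨hθ.1, hθ.2.trans_lt hp₀.2⟩
        (hp₀psi ▸ hpsi_mono.monotoneOn ⟨hθ.1, hθ.2.trans hp₀.2.le⟩ hp₀01 hθ.2)
  by_contra! hxs_le
  rcases hxs.1.eq_or_lt with rfl | hxs_pos
  · have hp₀' : p₀ ∈ Ioc (0:ℝ) 1 := Ioo_subset_Ioc_self hp₀
    exact (PiD_zero f g θss δ ▸ hmax p₀ hp₀01).not_gt (neg_muG_lt_PiD hf_int hf_cont hf_pos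
      hf_one hg_int hg hg_one hp₀ (hroots p₀ hp₀').1 (hroots p₀ hp₀').2 (hmono p₀ hp₀')
      ⟨hδ.1.le, hδ.2⟩)
  · exact (hmax q ⟨hp₀.1.le.trans hq.1.le, hq.2⟩).not_gt
      (PiD_lt_PiD hf_int hf_cont hf_pos hf_one hg_int hg hroots hmono hδ.1.le hxs_pos
        (hxs_le.trans_lt hq.1) hq.2 fun θ hθ => hslope θ ⟨hxs.1.trans hθ.1, hθ.2⟩)

/-- for every discount factor in (0,1), every maximizer of the
dynamic-mechanism profit on [0,1] lies strictly above the unique maximizer p0 of the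
ex-ante fixed-price profit (the unique solution of psi(p0) = mu). -/
theorem stmt10
    (f g : ℝ → ℝ)
    (hf_int : IntegrableOn f (Set.Icc 0 1))
    (hg_int : IntegrableOn g (Set.Icc 0 1))
    (hf_ae : ∀ᵐ t, t ∈ Set.Icc (0:ℝ) 1 → 0 < f t)
    (hg_ae : ∀ᵐ t, t ∈ Set.Icc (0:ℝ) 1 → 0 < g t)
    (hf_one : cdf f 1 = 1)
    (hg_one : cdf g 1 = 1)
    (hg_cont : ContinuousOn g (Set.Icc 0 1))
    (hg_pos : ∀ t ∈ Set.Icc (0:ℝ) 1, 0 < g t)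
    (hf_pos : ∀ t ∈ Set.Icc (0:ℝ) 1, 0 < f t)
    (fd : ℝ → ℝ) (hfd_cont : ContinuousOn fd (Set.Icc 0 1))
    (hf_deriv : ∀ t ∈ Set.Icc (0:ℝ) 1, HasDerivWithinAt f (fd t) (Set.Icc 0 1) t)
    (hpsi_mono : StrictMonoOn (psi f) (Set.Icc 0 1))
    (hpsiT_deriv : ∀ x ∈ Set.Ioc (0:ℝ) 1, ∃ d : ℝ → ℝ, ContinuousOn d (Set.Icc 0 x) ∧
      ∀ θ ∈ Set.Icc (0:ℝ) x, 0 < d θ ∧ HasDerivWithinAt (psiT f x) (d θ) (Set.Icc 0 x) θ)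
    (θs : ℝ) (hθs : θs ∈ Set.Ioo (0:ℝ) 1) (hθs0 : psi f θs = 0)
    (θss : ℝ → ℝ)
    (hθss : ∀ x ∈ Set.Ioc (0:ℝ) 1, θss x ∈ Set.Ioo 0 x ∧ psiT f x (θss x) = 0)
    (p₀ : ℝ) (hp₀ : p₀ ∈ Set.Ioo (0:ℝ) 1) (hp₀psi : psi f p₀ = muG g)
    (hp₀max : ∀ q ∈ Set.Icc (0:ℝ) 1, q ≠ p₀ →
      (1 - cdf f q) * (q - muG g) < (1 - cdf f p₀) * (p₀ - muG g)) :
    ∀ δ ∈ Set.Ioo (0:ℝ) 1, ∀ xs ∈ Set.Icc (0:ℝ) 1,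
      (∀ x ∈ Set.Icc (0:ℝ) 1, PiD f g θss x δ ≤ PiD f g θss xs δ) →
      p₀ < xs :=
  stmt10_general f g hf_int hg_int hf_one hg_one hg_cont hg_pos hf_pos fd hf_deriv hpsi_mono
    hpsiT_deriv θss hθss p₀ hp₀ hp₀psi
end

section
/- A function q ∈ M is an extreme point of the convex set M (within the real vector space of all functions [0,1]² → ℝ with pointwise operations) if and only if q(θ,ω) ∈ {0,1} for every (θ,ω) ∈ [0,1]². -/
open MeasureTheory

/-- The unit interval `[0,1]` as a subtype of `ℝ`. -/
abbrev I01 : Type := Set.Icc (0:ℝ) 1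

/-- `M` is the set of functions `q : [0,1]² → ℝ` with values in `[0,1]` that are weakly
increasing in the first argument and weakly decreasing in the second argument. -/
def Mset : Set (I01 × I01 → ℝ) :=
  {q | (∀ p, q p ∈ Set.Icc (0:ℝ) 1) ∧
       (∀ ω : I01, Monotone fun θ : I01 => q (θ, ω)) ∧
       (∀ θ : I01, Antitone fun ω : I01 => q (θ, ω))}

lemma minmax_sum (x : ℝ) : min (2*x) 1 + max (2*x - 1) 0 = 2*x := by
  rcases le_total (2*x) 1 with h | h
  · rw [min_eq_left h, max_eq_right (by linarith)]; ring
  · rw [min_eq_right h, max_eq_left (by linarith)]; ring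

/-- `q ∈ M` is an extreme point of `M` (i.e. whenever `q` is the midpoint of
two elements of `M` they both equal `q`) if and only if `q` is `{0,1}`-valued everywhere. -/
theorem stmt13 (q : I01 × I01 → ℝ) (hq : q ∈ Mset) :
    (∀ q₁ ∈ Mset, ∀ q₂ ∈ Mset, q = (1/2 : ℝ) • (q₁ + q₂) → q₁ = q ∧ q₂ = q) ↔
      (∀ p, q p = 0 ∨ q p = 1) := by
  obtain ⟨hb, hmono, hanti⟩ := hq
  constructor
  · intro h p
    by_contra hp
    push_neg at hp
    obtain ⟨hp0, hp1⟩ := hp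
    obtain ⟨h0, h1⟩ := hb p
    have hlt0 : 0 < q p := lt_of_le_of_ne h0 (Ne.symm hp0)
    have hlt1 : q p < 1 := lt_of_le_of_ne h1 hp1
    set q₁ : I01 × I01 → ℝ := fun p' => min (2 * q p') 1 with hq₁
    set q₂ : I01 × I01 → ℝ := fun p' => max (2 * q p' - 1) 0 with hq₂
    have m1 : q₁ ∈ Mset := by
      refine ⟨fun p' => ⟨le_min (by linarith [(hb p').1]) zero_le_one, min_le_right _ _⟩,
        fun ω a b hab => ?_, fun θ a b hab => ?_⟩
      · exact min_le_min (by linarith [hmono ω hab]) le_rfl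
      · exact min_le_min (by linarith [hanti θ hab]) le_rfl
    have m2 : q₂ ∈ Mset := by
      refine ⟨fun p' => ⟨le_max_right _ _, max_le (by linarith [(hb p').2]) zero_le_one⟩,
        fun ω a b hab => ?_, fun θ a b hab => ?_⟩
      · exact max_le_max (by linarith [hmono ω hab]) le_rfl
      · exact max_le_max (by linarith [hanti θ hab]) le_rfl
    have hmid : q = (1/2 : ℝ) • (q₁ + q₂) := by
      funext p'
      simp only [Pi.smul_apply, Pi.add_apply, smul_eq_mul, hq₁, hq₂, minmax_sum]
      ring
    have := (h q₁ m1 q₂ m2 hmid).1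
    have hne : q₁ p ≠ q p := by
      have : q p < min (2 * q p) 1 := lt_min (by linarith) hlt1
      exact ne_of_gt this
    exact hne (congrFun this p)
  · intro h q₁ ⟨hb1, _, _⟩ q₂ ⟨hb2, _, _⟩ heq
    have key : ∀ p, q₁ p = q p ∧ q₂ p = q p := by
      intro p
      have he : q p = 1/2 * (q₁ p + q₂ p) := by
        have := congrFun heq p; simpa using this
      obtain ⟨a1, b1⟩ := hb1 p
      obtain ⟨a2, b2⟩ := hb2 p
      rcases h p with h0 | h1
      · constructor <;> linarith
      · constructor <;> linarith
    exact ⟨funext fun p => (key p).1, funext fun p => (key p).2⟩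
end

section
/- (Two-dimensional Helly selection theorem.) For every sequence (qₙ) of functions qₙ : [0,1]×[0,1] → [0,1] such that each qₙ is weakly increasing in its first argument (for every fixed second argument) and weakly decreasing in its second argument (for every fixed first argument), there exist a subsequence (q_{n_k}) and a function q : [0,1]² → [0,1], weakly increasing in its first argument and weakly decreasing in its second argument, such that q_{n_k}(θ,ω) → q(θ,ω) as k → ∞ for Lebesgue-almost every (θ,ω) ∈ [0,1]². -/
open MeasureTheory

/-!
Composing with `y ↦ -y` turns the functions into monotone functions on `ℝ²` for the product
order. By compactness of `[0,1]^(ℚ²)` a subsequence converges at every rational point, to `g`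
say. Writing `z ≪ w` when both coordinates of `z` are smaller than those of `w`, the envelopes
`L z = sup {g r | r ≪ z}` and `U z = inf {g r | z ≪ r}` bound the `liminf` and the `limsup` of the
subsequence at `z`, so it converges to `L` wherever `U ≤ L`. Points of a diagonal line
`{(c + y, y)}` are totally ordered by `≪`, and `U z ≤ L w` for `z ≪ w`, so the intervals
`(L z, U z)` along a diagonal are disjoint and the gap set `{L < U}` meets every diagonal in a
countable set. Being Borel (`L` is lower, `U` upper semicontinuous), it is null by Fubini after a
shear.
-/

open Filter Set Topology

lemma exists_subseq_tendsto_of_mem_Icc {ι : Type*} [Countable ι] {a b : ℝ} {f : ℕ → ι → ℝ}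
    (hf : ∀ n i, f n i ∈ Icc a b) :
    ∃ (φ : ℕ → ℕ) (g : ι → ℝ), StrictMono φ ∧ (∀ i, g i ∈ Icc a b) ∧
      ∀ i, Tendsto (fun k => f (φ k) i) atTop (𝓝 (g i)) := by
  obtain ⟨g, hg, φ, hφ, hlim⟩ := (isCompact_univ_pi fun _ : ι => isCompact_Icc).tendsto_subseq
    (fun n => mem_univ_pi.2 (hf n))
  exact ⟨φ, g, hφ, mem_univ_pi.1 hg, tendsto_pi_nhds.1 hlim⟩

lemma countable_setOf_lt_of_le_of_lt {α : Type*} [LinearOrder α] {f g : α → ℝ}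
    (h : ∀ x y, x < y → g x ≤ f y) : {x | f x < g x}.Countable := by
  have hdisj : Pairwise (Function.onFun Disjoint fun x => Ioo (f x) (g x)) :=
    (pairwise_disjoint_on _).2 fun x y hxy =>
      Ioo_disjoint_Ioo.2 ((min_le_left _ _).trans ((h x y hxy).trans (le_max_right _ _)))
  exact PairwiseDisjoint.countable_of_isOpen (hdisj.set_pairwise _) (fun _ _ => isOpen_Ioo)
    (fun _ hx => nonempty_Ioo.2 hx)

lemma volume_eq_zero_of_countable_diagonal {s : Set (ℝ × ℝ)} (hs : MeasurableSet s)
    (h : ∀ c, {y | (c + y, y) ∈ s}.Countable) : volume s = 0 := by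
  have hshear := measurePreserving_add_prod (volume : Measure ℝ) volume
  rw [Measure.volume_eq_prod, ← hshear.measure_preimage hs.nullMeasurableSet,
    Measure.prod_apply (hs.preimage hshear.measurable)]
  exact (lintegral_congr fun c => (h c).measure_zero volume).trans lintegral_zero

lemma quasiMeasurePreserving_subtype_val {α : Type*} [MeasurableSpace α] (μ : Measure α)
    {s : Set α} (hs : MeasurableSet s) :
    Measure.QuasiMeasurePreserving (Subtype.val : s → α) (μ.comap Subtype.val) μ :=
  ⟨measurable_subtype_coe, by
    rw [(MeasurableEmbedding.subtype_coe hs).map_comap]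
    exact Measure.restrict_le_self.absolutelyContinuous⟩

namespace Helly

def StrictlyBelow (z w : ℝ × ℝ) : Prop := z.1 < w.1 ∧ z.2 < w.2

def ratPoint (r : ℚ × ℚ) : ℝ × ℝ := (r.1, r.2)

lemma StrictlyBelow.le {z w : ℝ × ℝ} (h : StrictlyBelow z w) : z ≤ w :=
  ⟨h.1.le, h.2.le⟩

lemma StrictlyBelow.trans_le {z w v : ℝ × ℝ} (h : StrictlyBelow z w) (hwv : w ≤ v) :
    StrictlyBelow z v :=
  ⟨h.1.trans_le hwv.1, h.2.trans_le hwv.2⟩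

lemma isOpen_setOf_strictlyBelow_left (w : ℝ × ℝ) : IsOpen {z | StrictlyBelow z w} :=
  (isOpen_lt continuous_fst continuous_const).inter (isOpen_lt continuous_snd continuous_const)

lemma isOpen_setOf_strictlyBelow_right (z : ℝ × ℝ) : IsOpen {w | StrictlyBelow z w} :=
  (isOpen_lt continuous_const continuous_fst).inter (isOpen_lt continuous_const continuous_snd)

lemma nonempty_ratPoint_strictlyBelow (z : ℝ × ℝ) :
    {r | StrictlyBelow (ratPoint r) z}.Nonempty := by
  obtain ⟨r₁, h₁⟩ := exists_rat_lt z.1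
  obtain ⟨r₂, h₂⟩ := exists_rat_lt z.2
  exact ⟨(r₁, r₂), h₁, h₂⟩

lemma nonempty_strictlyBelow_ratPoint (z : ℝ × ℝ) :
    {r | StrictlyBelow z (ratPoint r)}.Nonempty := by
  obtain ⟨r₁, h₁⟩ := exists_rat_gt z.1
  obtain ⟨r₂, h₂⟩ := exists_rat_gt z.2
  exact ⟨(r₁, r₂), h₁, h₂⟩

lemma exists_ratPoint_btwn {z w : ℝ × ℝ} (h : StrictlyBelow z w) :
    ∃ r, StrictlyBelow z (ratPoint r) ∧ StrictlyBelow (ratPoint r) w := by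
  obtain ⟨r₁, h₁, h₁'⟩ := exists_rat_btwn h.1
  obtain ⟨r₂, h₂, h₂'⟩ := exists_rat_btwn h.2
  exact ⟨(r₁, r₂), ⟨h₁, h₂⟩, h₁', h₂'⟩

noncomputable def lowerEnv (g : ℚ × ℚ → ℝ) (z : ℝ × ℝ) : ℝ :=
  sSup (g '' {r | StrictlyBelow (ratPoint r) z})

noncomputable def upperEnv (g : ℚ × ℚ → ℝ) (z : ℝ × ℝ) : ℝ :=
  sInf (g '' {r | StrictlyBelow z (ratPoint r)})

variable {g : ℚ × ℚ → ℝ}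

lemma le_lowerEnv (hg : BddAbove (range g)) {r : ℚ × ℚ} {z : ℝ × ℝ}
    (h : StrictlyBelow (ratPoint r) z) : g r ≤ lowerEnv g z :=
  le_csSup (hg.mono (image_subset_range _ _)) (mem_image_of_mem g h)

lemma upperEnv_le (hg : BddBelow (range g)) {r : ℚ × ℚ} {z : ℝ × ℝ}
    (h : StrictlyBelow z (ratPoint r)) : upperEnv g z ≤ g r :=
  csInf_le (hg.mono (image_subset_range _ _)) (mem_image_of_mem g h)

lemma lowerEnv_mem_Icc {a b : ℝ} (hg : ∀ r, g r ∈ Icc a b) (z : ℝ × ℝ) :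
    lowerEnv g z ∈ Icc a b := by
  obtain ⟨r, hr⟩ := nonempty_ratPoint_strictlyBelow z
  exact ⟨(hg r).1.trans (le_lowerEnv ⟨b, forall_mem_range.2 fun r => (hg r).2⟩ hr),
    csSup_le ((nonempty_ratPoint_strictlyBelow z).image g) (forall_mem_image.2 fun r _ => (hg r).2)⟩

lemma monotone_lowerEnv (hg : BddAbove (range g)) : Monotone (lowerEnv g) := fun z _ hzw =>
  csSup_le_csSup (hg.mono (image_subset_range _ _))
    ((nonempty_ratPoint_strictlyBelow z).image g)
    (image_mono fun _ hr => StrictlyBelow.trans_le hr hzw)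

lemma upperEnv_le_lowerEnv (hgA : BddAbove (range g)) (hgB : BddBelow (range g))
    {z w : ℝ × ℝ} (h : StrictlyBelow z w) : upperEnv g z ≤ lowerEnv g w := by
  obtain ⟨r, hzr, hrw⟩ := exists_ratPoint_btwn h
  exact (upperEnv_le hgB hzr).trans (le_lowerEnv hgA hrw)

lemma lowerSemicontinuous_lowerEnv (hg : BddAbove (range g)) :
    LowerSemicontinuous (lowerEnv g) := by
  intro z c hc
  obtain ⟨_, ⟨r, hr, rfl⟩, hcr⟩ := exists_lt_of_lt_csSup
    ((nonempty_ratPoint_strictlyBelow z).image g) hc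
  filter_upwards [(isOpen_setOf_strictlyBelow_right _).mem_nhds hr] with w hw
  exact hcr.trans_le (le_lowerEnv hg hw)

lemma upperSemicontinuous_upperEnv (hg : BddBelow (range g)) :
    UpperSemicontinuous (upperEnv g) := by
  intro z c hc
  obtain ⟨_, ⟨r, hr, rfl⟩, hrc⟩ := exists_lt_of_csInf_lt
    ((nonempty_strictlyBelow_ratPoint z).image g) hc
  filter_upwards [(isOpen_setOf_strictlyBelow_left _).mem_nhds hr] with w hw
  exact (upperEnv_le hg hw).trans_lt hrc

lemma volume_setOf_lowerEnv_lt_upperEnv (hgA : BddAbove (range g)) (hgB : BddBelow (range g)) :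
    volume {z | lowerEnv g z < upperEnv g z} = 0 := by
  refine volume_eq_zero_of_countable_diagonal (measurableSet_lt
    (lowerSemicontinuous_lowerEnv hgA).measurable (upperSemicontinuous_upperEnv hgB).measurable)
    fun c => countable_setOf_lt_of_le_of_lt fun y y' hy => ?_
  exact upperEnv_le_lowerEnv hgA hgB ⟨(add_lt_add_iff_left c).2 hy, hy⟩

lemma tendsto_lowerEnv_of_upperEnv_le {F : ℕ → ℝ × ℝ → ℝ} (hF : ∀ k, Monotone (F k))
    (hlim : ∀ r, Tendsto (fun k => F k (ratPoint r)) atTop (𝓝 (g r))) {z : ℝ × ℝ}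
    (hz : upperEnv g z ≤ lowerEnv g z) : Tendsto (fun k => F k z) atTop (𝓝 (lowerEnv g z)) := by
  refine tendsto_order.2 ⟨fun c hc => ?_, fun c hc => ?_⟩
  · obtain ⟨_, ⟨r, hr, rfl⟩, hcr⟩ := exists_lt_of_lt_csSup
      ((nonempty_ratPoint_strictlyBelow z).image g) hc
    filter_upwards [(tendsto_order.1 (hlim r)).1 c hcr] with k hk
    exact hk.trans_le (hF k hr.le)
  · obtain ⟨_, ⟨r, hr, rfl⟩, hrc⟩ := exists_lt_of_csInf_lt
      ((nonempty_strictlyBelow_ratPoint z).image g) (hz.trans_lt hc)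
    filter_upwards [(tendsto_order.1 (hlim r)).2 c hrc] with k hk
    exact (hF k hr.le).trans_lt hk

end Helly

open Helly in
theorem exists_subseq_ae_tendsto_of_monotone {a b : ℝ} {F : ℕ → ℝ × ℝ → ℝ}
    (hF : ∀ n z, F n z ∈ Icc a b) (hmono : ∀ n, Monotone (F n)) :
    ∃ (φ : ℕ → ℕ) (L : ℝ × ℝ → ℝ), StrictMono φ ∧ (∀ z, L z ∈ Icc a b) ∧ Monotone L ∧
      ∀ᵐ z, Tendsto (fun k => F (φ k) z) atTop (𝓝 (L z)) := by
  obtain ⟨φ, g, hφ, hg, hlim⟩ := exists_subseq_tendsto_of_mem_Icc fun n r => hF n (ratPoint r)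
  have hgA : BddAbove (range g) := ⟨b, forall_mem_range.2 fun r => (hg r).2⟩
  have hgB : BddBelow (range g) := ⟨a, forall_mem_range.2 fun r => (hg r).1⟩
  refine ⟨φ, lowerEnv g, hφ, lowerEnv_mem_Icc hg, monotone_lowerEnv hgA, ?_⟩
  filter_upwards [measure_eq_zero_iff_ae_notMem.1 (volume_setOf_lowerEnv_lt_upperEnv hgA hgB)]
    with z hz
  exact tendsto_lowerEnv_of_upperEnv_le (fun k => hmono (φ k)) hlim (not_lt.1 hz)

/-- two-dimensional Helly selection theorem: every sequence of functions
`[0,1]² → [0,1]` that are weakly increasing in the first argument and weakly decreasing in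
the second admits a subsequence converging Lebesgue-almost everywhere to a function with
the same monotonicity and range properties. -/
theorem stmt14
    (q : ℕ → I01 × I01 → ℝ)
    (hq01 : ∀ n p, q n p ∈ Set.Icc (0:ℝ) 1)
    (hmono : ∀ n (ω : I01), Monotone fun θ : I01 => q n (θ, ω))
    (hanti : ∀ n (θ : I01), Antitone fun ω : I01 => q n (θ, ω)) :
    ∃ (φ : ℕ → ℕ) (qe : I01 × I01 → ℝ), StrictMono φ ∧
      (∀ p, qe p ∈ Set.Icc (0:ℝ) 1) ∧
      (∀ ω : I01, Monotone fun θ : I01 => qe (θ, ω)) ∧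
      (∀ θ : I01, Antitone fun ω : I01 => qe (θ, ω)) ∧
      ∀ᵐ p : I01 × I01, Filter.Tendsto (fun k => q (φ k) p) Filter.atTop (nhds (qe p)) := by
  let reflect : I01 × I01 → ℝ × ℝ := Prod.map Subtype.val fun ω => -ω
  let F : ℕ → ℝ × ℝ → ℝ := fun n z =>
    q n (projIcc 0 1 zero_le_one z.1, projIcc 0 1 zero_le_one (-z.2))
  have hF_reflect : ∀ n p, F n (reflect p) = q n p := fun n p => by simp [F, reflect]
  have hF_mono : ∀ n, Monotone (F n) := fun n z w hzw =>
    (hmono n _ (monotone_projIcc _ hzw.1)).trans (hanti n _ (monotone_projIcc _ (neg_le_neg hzw.2)))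
  obtain ⟨φ, L, hφ, hL01, hL_mono, hL_lim⟩ :=
    exists_subseq_ae_tendsto_of_monotone (fun n z => hq01 n _) hF_mono
  have hreflect : Measure.QuasiMeasurePreserving reflect volume volume :=
    QuasiMeasurePreserving.prodMap (quasiMeasurePreserving_subtype_val volume measurableSet_Icc)
      ((Measure.measurePreserving_neg volume).quasiMeasurePreserving.comp
        (quasiMeasurePreserving_subtype_val volume measurableSet_Icc))
  refine ⟨φ, L ∘ reflect, hφ, fun p => hL01 _, fun ω θ θ' h => hL_mono ⟨h, le_rfl⟩,
    fun θ ω ω' h => hL_mono ⟨le_rfl, neg_le_neg h⟩, ?_⟩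
  filter_upwards [hreflect.ae hL_lim] with p hp
  exact hp.congr fun k => hF_reflect (φ k) p
end

section
/- Let q : [0,1]×[0,1] → {0,1} be weakly increasing in its first argument (for every fixed second argument), weakly decreasing in its second argument (for every fixed first argument), and suppose that for all (θ,ω) ∈ [0,1]²: (θ−ω)·q(θ,ω) = ∫₀^θ q(x,ω) dx + ∫_ω^1 q(θ,y) dy. Then q(θ,ω) = 0 whenever θ < ω, and there exists p ∈ [0,1] such that for all (θ,ω) ∈ [0,1]²: if θ > p and ω < p then q(θ,ω) = 1, and if θ < p or ω > p then q(θ,ω) = 0 (i.e., the allocation is a posted price with an at-will clause at price p). -/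
open MeasureTheory Set

/-- The threshold (price) generated by a point of the allocation rule. -/
noncomputable def thr (q : ℝ → ℝ → ℝ) (θ ω : ℝ) : ℝ := θ - ∫ x in ω..θ, q x ω

private lemma ae_ne_real (b : ℝ) : ∀ᵐ x : ℝ, x ≠ b := by
  have h : {x : ℝ | ¬ x ≠ b} = {b} := by ext x; simp
  rw [ae_iff, h, Real.volume_singleton]

private lemma int_zero_of_Ioo {f : ℝ → ℝ} {a b : ℝ} (hab : a ≤ b)
    (h : ∀ x ∈ Ioo a b, f x = 0) : ∫ x in a..b, f x = 0 := by
  have : ∫ x in a..b, f x = ∫ x in a..b, (0:ℝ) := by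
    apply intervalIntegral.integral_congr_ae
    filter_upwards [ae_ne_real b] with x hx hmem
    rw [uIoc_of_le hab] at hmem
    exact h x ⟨hmem.1, lt_of_le_of_ne hmem.2 hx⟩
  simpa using this

private lemma thresh_mono {f : ℝ → ℝ} {c d a : ℝ} (hcd : c ≤ d)
    (hf : MonotoneOn f (Icc c d)) (h01 : ∀ x ∈ Icc c d, f x = 0 ∨ f x = 1)
    (ha : (∫ t in c..d, f t) = d - a) :
    c ≤ a ∧ a ≤ d ∧ (∀ x ∈ Icc c d, a < x → f x = 1) ∧
      (∀ x ∈ Icc c d, x < a → f x = 0) := by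
  have hf' : MonotoneOn f (uIcc c d) := by rwa [uIcc_of_le hcd]
  have hint : IntervalIntegrable f volume c d := hf'.intervalIntegrable
  have h0 : ∀ x ∈ Icc c d, 0 ≤ f x := fun x hx => by rcases h01 x hx with h | h <;> simp [h]
  have h1 : ∀ x ∈ Icc c d, f x ≤ 1 := fun x hx => by rcases h01 x hx with h | h <;> simp [h]
  have hA0 : 0 ≤ ∫ t in c..d, f t := intervalIntegral.integral_nonneg hcd h0
  have hA1 : (∫ t in c..d, f t) ≤ d - c := by
    have := intervalIntegral.integral_mono_on hcd hint intervalIntegrable_const h1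
    simpa using this
  refine ⟨by linarith, by linarith, ?_, ?_⟩
  · intro x hx hax
    rcases h01 x hx with h | h
    · exfalso
      have hz : ∀ t ∈ Icc c x, f t = 0 := by
        intro t ht
        have htc : t ∈ Icc c d := ⟨ht.1, ht.2.trans hx.2⟩
        have hle := hf htc hx ht.2
        rw [h] at hle
        exact le_antisymm hle (h0 t htc)
      have hint1 : IntervalIntegrable f volume c x :=
        hint.mono_set (by rw [uIcc_of_le hx.1, uIcc_of_le hcd]; exact Icc_subset_Icc le_rfl hx.2)
      have hint2 : IntervalIntegrable f volume x d :=
        hint.mono_set (by rw [uIcc_of_le hx.2, uIcc_of_le hcd]; exact Icc_subset_Icc hx.1 le_rfl)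
      have e1 : ∫ t in c..x, f t = 0 := by
        rw [intervalIntegral.integral_congr (g := fun _ => (0:ℝ))
          (by intro t ht; rw [uIcc_of_le hx.1] at ht; exact hz t ht)]
        simp
      have e2 : (∫ t in x..d, f t) ≤ d - x := by
        have := intervalIntegral.integral_mono_on hx.2 hint2 intervalIntegrable_const
          (fun t ht => h1 t ⟨hx.1.trans ht.1, ht.2⟩)
        simpa using this
      have eadd : (∫ t in c..x, f t) + ∫ t in x..d, f t = ∫ t in c..d, f t :=
        intervalIntegral.integral_add_adjacent_intervals hint1 hint2
      linarith
    · exact h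
  · intro x hx hax
    rcases h01 x hx with h | h
    · exact h
    · exfalso
      have ho : ∀ t ∈ Icc x d, f t = 1 := by
        intro t ht
        have htc : t ∈ Icc c d := ⟨hx.1.trans ht.1, ht.2⟩
        have hle := hf hx htc ht.1
        rw [h] at hle
        exact le_antisymm (h1 t htc) hle
      have hint1 : IntervalIntegrable f volume c x :=
        hint.mono_set (by rw [uIcc_of_le hx.1, uIcc_of_le hcd]; exact Icc_subset_Icc le_rfl hx.2)
      have hint2 : IntervalIntegrable f volume x d :=
        hint.mono_set (by rw [uIcc_of_le hx.2, uIcc_of_le hcd]; exact Icc_subset_Icc hx.1 le_rfl)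
      have e1 : ∫ t in x..d, f t = d - x := by
        rw [intervalIntegral.integral_congr (g := fun _ => (1:ℝ))
          (by intro t ht; rw [uIcc_of_le hx.2] at ht; exact ho t ht)]
        simp
      have e0 : 0 ≤ ∫ t in c..x, f t :=
        intervalIntegral.integral_nonneg hx.1 (fun t ht => h0 t ⟨ht.1, ht.2.trans hx.2⟩)
      have eadd : (∫ t in c..x, f t) + ∫ t in x..d, f t = ∫ t in c..d, f t :=
        intervalIntegral.integral_add_adjacent_intervals hint1 hint2
      linarith

private lemma thresh_anti {f : ℝ → ℝ} {c d a : ℝ} (hcd : c ≤ d)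
    (hf : AntitoneOn f (Icc c d)) (h01 : ∀ x ∈ Icc c d, f x = 0 ∨ f x = 1)
    (ha : (∫ t in c..d, f t) = a - c) :
    c ≤ a ∧ a ≤ d ∧ (∀ x ∈ Icc c d, x < a → f x = 1) ∧
      (∀ x ∈ Icc c d, a < x → f x = 0) := by
  have hf' : AntitoneOn f (uIcc c d) := by rwa [uIcc_of_le hcd]
  have hint : IntervalIntegrable f volume c d := hf'.intervalIntegrable
  have h0 : ∀ x ∈ Icc c d, 0 ≤ f x := fun x hx => by rcases h01 x hx with h | h <;> simp [h]
  have h1 : ∀ x ∈ Icc c d, f x ≤ 1 := fun x hx => by rcases h01 x hx with h | h <;> simp [h]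
  have hA0 : 0 ≤ ∫ t in c..d, f t := intervalIntegral.integral_nonneg hcd h0
  have hA1 : (∫ t in c..d, f t) ≤ d - c := by
    have := intervalIntegral.integral_mono_on hcd hint intervalIntegrable_const h1
    simpa using this
  refine ⟨by linarith, by linarith, ?_, ?_⟩
  · intro x hx hax
    rcases h01 x hx with h | h
    · exfalso
      have hz : ∀ t ∈ Icc x d, f t = 0 := by
        intro t ht
        have htc : t ∈ Icc c d := ⟨hx.1.trans ht.1, ht.2⟩
        have hle := hf hx htc ht.1
        rw [h] at hle
        exact le_antisymm hle (h0 t htc)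
      have hint1 : IntervalIntegrable f volume c x :=
        hint.mono_set (by rw [uIcc_of_le hx.1, uIcc_of_le hcd]; exact Icc_subset_Icc le_rfl hx.2)
      have hint2 : IntervalIntegrable f volume x d :=
        hint.mono_set (by rw [uIcc_of_le hx.2, uIcc_of_le hcd]; exact Icc_subset_Icc hx.1 le_rfl)
      have e1 : ∫ t in x..d, f t = 0 := by
        rw [intervalIntegral.integral_congr (g := fun _ => (0:ℝ))
          (by intro t ht; rw [uIcc_of_le hx.2] at ht; exact hz t ht)]
        simp
      have e2 : (∫ t in c..x, f t) ≤ x - c := by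
        have := intervalIntegral.integral_mono_on hx.1 hint1 intervalIntegrable_const
          (fun t ht => h1 t ⟨ht.1, ht.2.trans hx.2⟩)
        simpa using this
      have eadd : (∫ t in c..x, f t) + ∫ t in x..d, f t = ∫ t in c..d, f t :=
        intervalIntegral.integral_add_adjacent_intervals hint1 hint2
      linarith
    · exact h
  · intro x hx hax
    rcases h01 x hx with h | h
    · exact h
    · exfalso
      have ho : ∀ t ∈ Icc c x, f t = 1 := by
        intro t ht
        have htc : t ∈ Icc c d := ⟨ht.1, ht.2.trans hx.2⟩
        have hle := hf htc hx ht.2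
        rw [h] at hle
        exact le_antisymm (h1 t htc) hle
      have hint1 : IntervalIntegrable f volume c x :=
        hint.mono_set (by rw [uIcc_of_le hx.1, uIcc_of_le hcd]; exact Icc_subset_Icc le_rfl hx.2)
      have hint2 : IntervalIntegrable f volume x d :=
        hint.mono_set (by rw [uIcc_of_le hx.2, uIcc_of_le hcd]; exact Icc_subset_Icc hx.1 le_rfl)
      have e1 : ∫ t in c..x, f t = x - c := by
        rw [intervalIntegral.integral_congr (g := fun _ => (1:ℝ))
          (by intro t ht; rw [uIcc_of_le hx.1] at ht; exact ho t ht)]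
        simp
      have e0 : 0 ≤ ∫ t in x..d, f t :=
        intervalIntegral.integral_nonneg hx.2 (fun t ht => h0 t ⟨hx.1.trans ht.1, ht.2⟩)
      have eadd : (∫ t in c..x, f t) + ∫ t in x..d, f t = ∫ t in c..d, f t :=
        intervalIntegral.integral_add_adjacent_intervals hint1 hint2
      linarith

private lemma vanish
    (q : ℝ → ℝ → ℝ)
    (h01 : ∀ θ ∈ Set.Icc (0:ℝ) 1, ∀ ω ∈ Set.Icc (0:ℝ) 1, q θ ω = 0 ∨ q θ ω = 1)
    (hmono : ∀ ω ∈ Set.Icc (0:ℝ) 1, MonotoneOn (fun θ => q θ ω) (Set.Icc 0 1))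
    (hanti : ∀ θ ∈ Set.Icc (0:ℝ) 1, AntitoneOn (fun ω => q θ ω) (Set.Icc 0 1))
    (henv : ∀ θ ∈ Set.Icc (0:ℝ) 1, ∀ ω ∈ Set.Icc (0:ℝ) 1,
      (θ - ω) * q θ ω = (∫ x in (0:ℝ)..θ, q x ω) + ∫ y in ω..(1:ℝ), q θ y) :
    ∀ θ ∈ Set.Icc (0:ℝ) 1, ∀ ω ∈ Set.Icc (0:ℝ) 1, θ < ω → q θ ω = 0 := by
  intro θ hθ ω hω hlt
  rcases h01 θ hθ ω hω with h | h
  · exact h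
  exfalso
  have henv' := henv θ hθ ω hω
  rw [h, mul_one] at henv'
  have i1 : 0 ≤ ∫ x in (0:ℝ)..θ, q x ω :=
    intervalIntegral.integral_nonneg hθ.1 (fun x hx => by
      rcases h01 x ⟨hx.1, hx.2.trans hθ.2⟩ ω hω with h' | h' <;> simp [h'])
  have i2 : 0 ≤ ∫ y in ω..(1:ℝ), q θ y :=
    intervalIntegral.integral_nonneg hω.2 (fun y hy => by
      rcases h01 θ hθ y ⟨hω.1.trans hy.1, hy.2⟩ with h' | h' <;> simp [h'])
  linarith

private lemma structure_lemma
    (q : ℝ → ℝ → ℝ)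
    (h01 : ∀ θ ∈ Set.Icc (0:ℝ) 1, ∀ ω ∈ Set.Icc (0:ℝ) 1, q θ ω = 0 ∨ q θ ω = 1)
    (hmono : ∀ ω ∈ Set.Icc (0:ℝ) 1, MonotoneOn (fun θ => q θ ω) (Set.Icc 0 1))
    (hanti : ∀ θ ∈ Set.Icc (0:ℝ) 1, AntitoneOn (fun ω => q θ ω) (Set.Icc 0 1))
    (henv : ∀ θ ∈ Set.Icc (0:ℝ) 1, ∀ ω ∈ Set.Icc (0:ℝ) 1,
      (θ - ω) * q θ ω = (∫ x in (0:ℝ)..θ, q x ω) + ∫ y in ω..(1:ℝ), q θ y)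
    {θ ω : ℝ} (hθ : θ ∈ Set.Icc (0:ℝ) 1) (hω : ω ∈ Set.Icc (0:ℝ) 1)
    (hq : q θ ω = 1) :
    ω ≤ thr q θ ω ∧ thr q θ ω ≤ θ ∧
    (∀ x ∈ Set.Icc (0:ℝ) 1, thr q θ ω < x → q x ω = 1) ∧
    (∀ x ∈ Set.Icc (0:ℝ) 1, x < thr q θ ω → q x ω = 0) ∧
    (∀ y ∈ Set.Icc (0:ℝ) 1, y < thr q θ ω → q θ y = 1) ∧
    (∀ y ∈ Set.Icc (0:ℝ) 1, thr q θ ω < y → q θ y = 0) := by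
  have hV := vanish q h01 hmono hanti henv
  have hωθ : ω ≤ θ := by
    by_contra hc
    rw [hV θ hθ ω hω (lt_of_not_ge hc)] at hq
    exact zero_ne_one hq
  -- integrability helpers
  have hsub : ∀ a b : ℝ, a ∈ Icc (0:ℝ) 1 → b ∈ Icc (0:ℝ) 1 → uIcc a b ⊆ Icc (0:ℝ) 1 := by
    intro a b ha hb
    rw [← uIcc_of_le (zero_le_one' ℝ)]
    exact uIcc_subset_uIcc (by rwa [uIcc_of_le (zero_le_one' ℝ)])
      (by rwa [uIcc_of_le (zero_le_one' ℝ)])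
  have hcol : ∀ a b : ℝ, a ∈ Icc (0:ℝ) 1 → b ∈ Icc (0:ℝ) 1 →
      IntervalIntegrable (fun x => q x ω) volume a b := fun a b ha hb =>
    ((hmono ω hω).mono (hsub a b ha hb)).intervalIntegrable
  have hrow : ∀ a b : ℝ, a ∈ Icc (0:ℝ) 1 → b ∈ Icc (0:ℝ) 1 →
      IntervalIntegrable (fun y => q θ y) volume a b := fun a b ha hb =>
    ((hanti θ hθ).mono (hsub a b ha hb)).intervalIntegrable
  -- the envelope identity at (θ, ω)
  have henv' := henv θ hθ ω hω
  rw [hq, mul_one] at henv'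
  have e0 : ∫ x in (0:ℝ)..ω, q x ω = 0 :=
    int_zero_of_Ioo hω.1 (fun x hx => hV x ⟨hx.1.le, hx.2.le.trans hω.2⟩ ω hω hx.2)
  have e1 : ∫ y in θ..(1:ℝ), q θ y = 0 :=
    int_zero_of_Ioo hθ.2 (fun y hy => hV θ hθ y ⟨hθ.1.trans hy.1.le, hy.2.le⟩ hy.1)
  have hωI : ω ∈ Icc (0:ℝ) 1 := hω
  have hθI : θ ∈ Icc (0:ℝ) 1 := hθ
  have esplit1 : (∫ x in (0:ℝ)..ω, q x ω) + (∫ x in ω..θ, q x ω) = ∫ x in (0:ℝ)..θ, q x ω :=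
    intervalIntegral.integral_add_adjacent_intervals
      (hcol 0 ω ⟨le_rfl, zero_le_one⟩ hωI) (hcol ω θ hωI hθI)
  have esplit2 : (∫ y in ω..θ, q θ y) + (∫ y in θ..(1:ℝ), q θ y) = ∫ y in ω..(1:ℝ), q θ y :=
    intervalIntegral.integral_add_adjacent_intervals
      (hrow ω θ hωI hθI) (hrow θ 1 hθI ⟨zero_le_one, le_rfl⟩)
  have hthr : thr q θ ω = θ - ∫ x in ω..θ, q x ω := rfl
  have hAcol : (∫ x in ω..θ, q x ω) = θ - thr q θ ω := by rw [hthr]; ring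
  have hBrow : (∫ y in ω..θ, q θ y) = thr q θ ω - ω := by
    rw [hthr]; linarith [esplit1, esplit2, e0, e1, henv']
  -- thresholds
  have hIccsub : Icc ω θ ⊆ Icc (0:ℝ) 1 := Icc_subset_Icc hω.1 hθ.2
  obtain ⟨hc1, hc2, hc3, hc4⟩ := thresh_mono hωθ ((hmono ω hω).mono hIccsub)
    (fun x hx => h01 x (hIccsub hx) ω hω) hAcol
  obtain ⟨_, _, hr3, hr4⟩ := thresh_anti hωθ ((hanti θ hθ).mono hIccsub)
    (fun y hy => h01 θ hθ y (hIccsub hy)) hBrow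
  refine ⟨hc1, hc2, ?_, ?_, ?_, ?_⟩
  · intro x hx hpx
    rcases le_or_gt x θ with hxθ | hxθ
    · exact hc3 x ⟨hc1.trans hpx.le, hxθ⟩ hpx
    · have hge : q θ ω ≤ q x ω := hmono ω hω hθ hx hxθ.le
      rw [hq] at hge
      rcases h01 x hx ω hω with h | h
      · rw [h] at hge; linarith
      · exact h
  · intro x hx hxp
    rcases le_or_gt ω x with hωx | hωx
    · exact hc4 x ⟨hωx, hxp.le.trans hc2⟩ hxp
    · exact hV x hx ω hω hωx
  · intro y hy hyp
    rcases le_or_gt ω y with hωy | hωy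
    · exact hr3 y ⟨hωy, hyp.le.trans hc2⟩ hyp
    · have hge : q θ ω ≤ q θ y := hanti θ hθ hy hω hωy.le
      rw [hq] at hge
      rcases h01 θ hθ y hy with h | h
      · rw [h] at hge; linarith
      · exact h
  · intro y hy hpy
    rcases le_or_gt y θ with hyθ | hyθ
    · exact hr4 y ⟨hc1.trans hpy.le, hyθ⟩ hpy
    · exact hV θ hθ y hy hyθ

private lemma col_aux
    (q : ℝ → ℝ → ℝ)
    (h01 : ∀ θ ∈ Set.Icc (0:ℝ) 1, ∀ ω ∈ Set.Icc (0:ℝ) 1, q θ ω = 0 ∨ q θ ω = 1)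
    (hmono : ∀ ω ∈ Set.Icc (0:ℝ) 1, MonotoneOn (fun θ => q θ ω) (Set.Icc 0 1))
    (hanti : ∀ θ ∈ Set.Icc (0:ℝ) 1, AntitoneOn (fun ω => q θ ω) (Set.Icc 0 1))
    (henv : ∀ θ ∈ Set.Icc (0:ℝ) 1, ∀ ω ∈ Set.Icc (0:ℝ) 1,
      (θ - ω) * q θ ω = (∫ x in (0:ℝ)..θ, q x ω) + ∫ y in ω..(1:ℝ), q θ y)
    {θ₁ θ₂ ω : ℝ} (hθ₁ : θ₁ ∈ Set.Icc (0:ℝ) 1) (hθ₂ : θ₂ ∈ Set.Icc (0:ℝ) 1)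
    (hω : ω ∈ Set.Icc (0:ℝ) 1) (h1 : q θ₁ ω = 1) (h2 : q θ₂ ω = 1) :
    ¬ thr q θ₁ ω < thr q θ₂ ω := by
  intro hlt
  obtain ⟨ha1, hb1, hone1, _, _, _⟩ := structure_lemma q h01 hmono hanti henv hθ₁ hω h1
  obtain ⟨ha2, hb2, _, hzero2, _, _⟩ := structure_lemma q h01 hmono hanti henv hθ₂ hω h2
  have hx : (thr q θ₁ ω + thr q θ₂ ω) / 2 ∈ Icc (0:ℝ) 1 :=
    ⟨by linarith [hω.1], by linarith [hθ₂.2]⟩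
  have e1 := hone1 _ hx (by linarith)
  have e2 := hzero2 _ hx (by linarith)
  rw [e1] at e2; exact one_ne_zero e2

private lemma col_eq
    (q : ℝ → ℝ → ℝ)
    (h01 : ∀ θ ∈ Set.Icc (0:ℝ) 1, ∀ ω ∈ Set.Icc (0:ℝ) 1, q θ ω = 0 ∨ q θ ω = 1)
    (hmono : ∀ ω ∈ Set.Icc (0:ℝ) 1, MonotoneOn (fun θ => q θ ω) (Set.Icc 0 1))
    (hanti : ∀ θ ∈ Set.Icc (0:ℝ) 1, AntitoneOn (fun ω => q θ ω) (Set.Icc 0 1))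
    (henv : ∀ θ ∈ Set.Icc (0:ℝ) 1, ∀ ω ∈ Set.Icc (0:ℝ) 1,
      (θ - ω) * q θ ω = (∫ x in (0:ℝ)..θ, q x ω) + ∫ y in ω..(1:ℝ), q θ y)
    {θ₁ θ₂ ω : ℝ} (hθ₁ : θ₁ ∈ Set.Icc (0:ℝ) 1) (hθ₂ : θ₂ ∈ Set.Icc (0:ℝ) 1)
    (hω : ω ∈ Set.Icc (0:ℝ) 1) (h1 : q θ₁ ω = 1) (h2 : q θ₂ ω = 1) :
    thr q θ₁ ω = thr q θ₂ ω :=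
  le_antisymm (not_lt.mp (col_aux q h01 hmono hanti henv hθ₂ hθ₁ hω h2 h1))
    (not_lt.mp (col_aux q h01 hmono hanti henv hθ₁ hθ₂ hω h1 h2))

private lemma row_aux
    (q : ℝ → ℝ → ℝ)
    (h01 : ∀ θ ∈ Set.Icc (0:ℝ) 1, ∀ ω ∈ Set.Icc (0:ℝ) 1, q θ ω = 0 ∨ q θ ω = 1)
    (hmono : ∀ ω ∈ Set.Icc (0:ℝ) 1, MonotoneOn (fun θ => q θ ω) (Set.Icc 0 1))
    (hanti : ∀ θ ∈ Set.Icc (0:ℝ) 1, AntitoneOn (fun ω => q θ ω) (Set.Icc 0 1))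
    (henv : ∀ θ ∈ Set.Icc (0:ℝ) 1, ∀ ω ∈ Set.Icc (0:ℝ) 1,
      (θ - ω) * q θ ω = (∫ x in (0:ℝ)..θ, q x ω) + ∫ y in ω..(1:ℝ), q θ y)
    {θ ω₁ ω₂ : ℝ} (hθ : θ ∈ Set.Icc (0:ℝ) 1) (hω₁ : ω₁ ∈ Set.Icc (0:ℝ) 1)
    (hω₂ : ω₂ ∈ Set.Icc (0:ℝ) 1) (h1 : q θ ω₁ = 1) (h2 : q θ ω₂ = 1) :
    ¬ thr q θ ω₁ < thr q θ ω₂ := by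
  intro hlt
  obtain ⟨ha1, hb1, _, _, _, hzero1⟩ := structure_lemma q h01 hmono hanti henv hθ hω₁ h1
  obtain ⟨ha2, hb2, _, _, hone2, _⟩ := structure_lemma q h01 hmono hanti henv hθ hω₂ h2
  have hx : (thr q θ ω₁ + thr q θ ω₂) / 2 ∈ Icc (0:ℝ) 1 :=
    ⟨by linarith [hω₁.1], by linarith [hθ.2]⟩
  have e1 := hone2 _ hx (by linarith)
  have e2 := hzero1 _ hx (by linarith)
  rw [e1] at e2; exact one_ne_zero e2

private lemma row_eq
    (q : ℝ → ℝ → ℝ)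
    (h01 : ∀ θ ∈ Set.Icc (0:ℝ) 1, ∀ ω ∈ Set.Icc (0:ℝ) 1, q θ ω = 0 ∨ q θ ω = 1)
    (hmono : ∀ ω ∈ Set.Icc (0:ℝ) 1, MonotoneOn (fun θ => q θ ω) (Set.Icc 0 1))
    (hanti : ∀ θ ∈ Set.Icc (0:ℝ) 1, AntitoneOn (fun ω => q θ ω) (Set.Icc 0 1))
    (henv : ∀ θ ∈ Set.Icc (0:ℝ) 1, ∀ ω ∈ Set.Icc (0:ℝ) 1,
      (θ - ω) * q θ ω = (∫ x in (0:ℝ)..θ, q x ω) + ∫ y in ω..(1:ℝ), q θ y)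
    {θ ω₁ ω₂ : ℝ} (hθ : θ ∈ Set.Icc (0:ℝ) 1) (hω₁ : ω₁ ∈ Set.Icc (0:ℝ) 1)
    (hω₂ : ω₂ ∈ Set.Icc (0:ℝ) 1) (h1 : q θ ω₁ = 1) (h2 : q θ ω₂ = 1) :
    thr q θ ω₁ = thr q θ ω₂ :=
  le_antisymm (not_lt.mp (row_aux q h01 hmono hanti henv hθ hω₂ hω₁ h2 h1))
    (not_lt.mp (row_aux q h01 hmono hanti henv hθ hω₁ hω₂ h1 h2))

private lemma glob_aux
    (q : ℝ → ℝ → ℝ)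
    (h01 : ∀ θ ∈ Set.Icc (0:ℝ) 1, ∀ ω ∈ Set.Icc (0:ℝ) 1, q θ ω = 0 ∨ q θ ω = 1)
    (hmono : ∀ ω ∈ Set.Icc (0:ℝ) 1, MonotoneOn (fun θ => q θ ω) (Set.Icc 0 1))
    (hanti : ∀ θ ∈ Set.Icc (0:ℝ) 1, AntitoneOn (fun ω => q θ ω) (Set.Icc 0 1))
    (henv : ∀ θ ∈ Set.Icc (0:ℝ) 1, ∀ ω ∈ Set.Icc (0:ℝ) 1,
      (θ - ω) * q θ ω = (∫ x in (0:ℝ)..θ, q x ω) + ∫ y in ω..(1:ℝ), q θ y)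
    {θ₁ ω₁ θ₂ ω₂ : ℝ} (hθ₁ : θ₁ ∈ Set.Icc (0:ℝ) 1) (hω₁ : ω₁ ∈ Set.Icc (0:ℝ) 1)
    (hθ₂ : θ₂ ∈ Set.Icc (0:ℝ) 1) (hω₂ : ω₂ ∈ Set.Icc (0:ℝ) 1)
    (h1 : q θ₁ ω₁ = 1) (h2 : q θ₂ ω₂ = 1) :
    ¬ thr q θ₁ ω₁ < thr q θ₂ ω₂ := by
  intro hlt
  obtain ⟨ha1, hb1, hone1, _, _, _⟩ := structure_lemma q h01 hmono hanti henv hθ₁ hω₁ h1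
  obtain ⟨ha2, hb2, _, _, hone2, _⟩ := structure_lemma q h01 hmono hanti henv hθ₂ hω₂ h2
  set p₁ := thr q θ₁ ω₁ with hp₁
  set p₂ := thr q θ₂ ω₂ with hp₂
  rcases eq_or_lt_of_le (hω₁.1.trans ha1) with hp10 | hp10
  · -- p₁ = 0, hence ω₁ = 0
    have hω10 : ω₁ = 0 := le_antisymm (by linarith) hω₁.1
    have h0I : (0:ℝ) ∈ Icc (0:ℝ) 1 := ⟨le_rfl, zero_le_one⟩
    have h5 : q θ₂ 0 = 1 := hone2 0 h0I (by linarith)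
    have e1 : thr q θ₂ 0 = p₂ := row_eq q h01 hmono hanti henv hθ₂ h0I hω₂ h5 h2
    have e2 : thr q θ₁ ω₁ = thr q θ₂ 0 := by
      rw [hω10]
      exact col_eq q h01 hmono hanti henv hθ₁ hθ₂ h0I (hω10 ▸ h1) h5
    have e3 : p₁ = p₂ := by rw [hp₁, e2, e1]
    linarith
  · -- 0 < p₁
    set w : ℝ := (p₁ + p₂) / 2 with hw
    set w' : ℝ := p₁ / 2 with hw'
    have hwI : w ∈ Icc (0:ℝ) 1 := ⟨by linarith [hω₁.1], by linarith [hθ₂.2]⟩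
    have hw'I : w' ∈ Icc (0:ℝ) 1 := ⟨by linarith, by linarith [hθ₁.2]⟩
    have hqw : q w ω₁ = 1 := hone1 w hwI (by linarith)
    have ethr : thr q w ω₁ = p₁ :=
      col_eq q h01 hmono hanti henv hwI hθ₁ hω₁ hqw h1
    obtain ⟨_, _, _, _, honew, _⟩ := structure_lemma q h01 hmono hanti henv hwI hω₁ hqw
    have hq2 : q w w' = 1 := honew w' hw'I (by rw [ethr]; linarith)
    have hq3 : q θ₂ w' = 1 := hone2 w' hw'I (by linarith)
    have ethr2 : thr q θ₂ w' = p₂ :=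
      row_eq q h01 hmono hanti henv hθ₂ hw'I hω₂ hq3 h2
    obtain ⟨_, _, _, hzero2', _, _⟩ := structure_lemma q h01 hmono hanti henv hθ₂ hw'I hq3
    have hq4 : q w w' = 0 := hzero2' w hwI (by rw [ethr2]; linarith)
    rw [hq2] at hq4; exact one_ne_zero hq4

private lemma glob_eq
    (q : ℝ → ℝ → ℝ)
    (h01 : ∀ θ ∈ Set.Icc (0:ℝ) 1, ∀ ω ∈ Set.Icc (0:ℝ) 1, q θ ω = 0 ∨ q θ ω = 1)
    (hmono : ∀ ω ∈ Set.Icc (0:ℝ) 1, MonotoneOn (fun θ => q θ ω) (Set.Icc 0 1))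
    (hanti : ∀ θ ∈ Set.Icc (0:ℝ) 1, AntitoneOn (fun ω => q θ ω) (Set.Icc 0 1))
    (henv : ∀ θ ∈ Set.Icc (0:ℝ) 1, ∀ ω ∈ Set.Icc (0:ℝ) 1,
      (θ - ω) * q θ ω = (∫ x in (0:ℝ)..θ, q x ω) + ∫ y in ω..(1:ℝ), q θ y)
    {θ₁ ω₁ θ₂ ω₂ : ℝ} (hθ₁ : θ₁ ∈ Set.Icc (0:ℝ) 1) (hω₁ : ω₁ ∈ Set.Icc (0:ℝ) 1)
    (hθ₂ : θ₂ ∈ Set.Icc (0:ℝ) 1) (hω₂ : ω₂ ∈ Set.Icc (0:ℝ) 1)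
    (h1 : q θ₁ ω₁ = 1) (h2 : q θ₂ ω₂ = 1) :
    thr q θ₁ ω₁ = thr q θ₂ ω₂ :=
  le_antisymm (not_lt.mp (glob_aux q h01 hmono hanti henv hθ₂ hω₂ hθ₁ hω₁ h2 h1))
    (not_lt.mp (glob_aux q h01 hmono hanti henv hθ₁ hω₁ hθ₂ hω₂ h1 h2))


/-- a `{0,1}`-valued allocation rule on `[0,1]²`, weakly increasing in the
buyer's value `θ` and weakly decreasing in the seller's cost `ω`, satisfying the combined
buyer/seller envelope (incentive-compatibility) identity
`(θ−ω)·q(θ,ω) = ∫₀^θ q(x,ω) dx + ∫_ω^1 q(θ,y) dy`, vanishes whenever `θ < ω` and is a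
posted price with an at-will clause: there is `p ∈ [0,1]` with `q(θ,ω) = 1` whenever
`θ > p > ω` and `q(θ,ω) = 0` whenever `θ < p` or `ω > p`. -/
theorem stmt15
    (q : ℝ → ℝ → ℝ)
    (h01 : ∀ θ ∈ Set.Icc (0:ℝ) 1, ∀ ω ∈ Set.Icc (0:ℝ) 1, q θ ω = 0 ∨ q θ ω = 1)
    (hmono : ∀ ω ∈ Set.Icc (0:ℝ) 1, MonotoneOn (fun θ => q θ ω) (Set.Icc 0 1))
    (hanti : ∀ θ ∈ Set.Icc (0:ℝ) 1, AntitoneOn (fun ω => q θ ω) (Set.Icc 0 1))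
    (henv : ∀ θ ∈ Set.Icc (0:ℝ) 1, ∀ ω ∈ Set.Icc (0:ℝ) 1,
      (θ - ω) * q θ ω = (∫ x in (0:ℝ)..θ, q x ω) + ∫ y in ω..(1:ℝ), q θ y) :
    (∀ θ ∈ Set.Icc (0:ℝ) 1, ∀ ω ∈ Set.Icc (0:ℝ) 1, θ < ω → q θ ω = 0) ∧
    ∃ p ∈ Set.Icc (0:ℝ) 1, ∀ θ ∈ Set.Icc (0:ℝ) 1, ∀ ω ∈ Set.Icc (0:ℝ) 1,
      (p < θ → ω < p → q θ ω = 1) ∧ ((θ < p ∨ p < ω) → q θ ω = 0) := by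
  refine ⟨vanish q h01 hmono hanti henv, ?_⟩
  by_cases hex : ∃ θ ∈ Set.Icc (0:ℝ) 1, ∃ ω ∈ Set.Icc (0:ℝ) 1, q θ ω = 1
  · obtain ⟨θ₀, hθ₀, ω₀, hω₀, h₀⟩ := hex
    obtain ⟨ha0, hb0, hone0, _, _, _⟩ := structure_lemma q h01 hmono hanti henv hθ₀ hω₀ h₀
    refine ⟨thr q θ₀ ω₀, ⟨hω₀.1.trans ha0, hb0.trans hθ₀.2⟩, ?_⟩
    intro θ hθ ω hω
    constructor
    · intro hpθ hωp
      have hq1 : q θ ω₀ = 1 := hone0 θ hθ hpθ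
      have ethr : thr q θ ω₀ = thr q θ₀ ω₀ :=
        col_eq q h01 hmono hanti henv hθ hθ₀ hω₀ hq1 h₀
      obtain ⟨_, _, _, _, hone1, _⟩ := structure_lemma q h01 hmono hanti henv hθ hω₀ hq1
      exact hone1 ω hω (by rw [ethr]; exact hωp)
    · intro hcase
      rcases h01 θ hθ ω hω with h | h
      · exact h
      exfalso
      obtain ⟨ha, hb, _, _, _, _⟩ := structure_lemma q h01 hmono hanti henv hθ hω h
      have ethr : thr q θ ω = thr q θ₀ ω₀ :=
        glob_eq q h01 hmono hanti henv hθ hω hθ₀ hω₀ h h₀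
      rcases hcase with hc | hc
      · rw [ethr] at hb; linarith
      · rw [ethr] at ha; linarith
  · push_neg at hex
    refine ⟨1, ⟨zero_le_one, le_rfl⟩, ?_⟩
    intro θ hθ ω hω
    constructor
    · intro hpθ _
      exact absurd hθ.2 (not_le.mpr hpθ)
    · intro _
      rcases h01 θ hθ ω hω with h | h
      · exact h
      · exact absurd h (hex θ hθ ω hω)
end

section
/- For every δ ∈ (0,1), the function h_δ : [0,1] → ℝ defined by h_δ(x) = (1−x)·(x − δx²/4 − 1/2) + δx³/12 attains its maximum over [0,1] at the unique point x* = (4 + δ − √((4−δ)² − 8δ))/(4δ), which lies in (0,1); i.e., h_δ(x) < h_δ(x*) for every x ∈ [0,1] with x ≠ x*. -/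
/-!
`2 h_δ'(x) = 2δx² − (4+δ)x + 3`, and `x*` is the smaller root of this quadratic (its
discriminant is `(4−δ)² − 8δ`). Since `h_δ` is a cubic with `h_δ''' = 2δ`, Taylor expansion at
the critical point `y` gives `h_δ(y) − h_δ(x) = (x−y)² (1 + δ/4 − δ(2y+x)/3)`, and the last factor
is at least `1 − 3δ/4 > 0` whenever `x, y ≤ 1` and `0 ≤ δ ≤ 1`.
-/

/-- Seller's ex-ante expected profit from the dynamic mechanism with time-0 acceptance
threshold `x` in the uniform example: `h_δ(x) = (1−x)(x − δx²/4 − 1/2) + δx³/12`. -/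
noncomputable def hDyn (δ x : ℝ) : ℝ := (1 - x) * (x - δ * x^2 / 4 - 1/2) + δ * x^3 / 12

noncomputable def xStar (δ : ℝ) : ℝ := (4 + δ - Real.sqrt ((4 - δ)^2 - 8 * δ)) / (4 * δ)

lemma xStar_mem_Ioo {δ : ℝ} (hδ : δ ∈ Set.Ioo (0:ℝ) 1) : xStar δ ∈ Set.Ioo (0:ℝ) 1 := by
  obtain ⟨hδ0, hδ1⟩ := hδ
  have hsqrt_lt : √((4 - δ) ^ 2 - 8 * δ) < 4 + δ :=
    (Real.sqrt_lt' (by linarith)).mpr (by nlinarith)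
  have hsqrt_gt : 4 - 3 * δ < √((4 - δ) ^ 2 - 8 * δ) :=
    (Real.lt_sqrt (by linarith)).mpr (by nlinarith)
  exact ⟨div_pos (by linarith) (by positivity), (div_lt_one (by positivity)).mpr (by linarith)⟩

lemma xStar_isCritical {δ : ℝ} (hδ : δ ≠ 0) (hD : 0 ≤ (4 - δ) ^ 2 - 8 * δ) :
    2 * δ * xStar δ ^ 2 - (4 + δ) * xStar δ + 3 = 0 := by
  have hdiscrim : discrim (2 * δ) (-(4 + δ)) 3 =
      √((4 - δ) ^ 2 - 8 * δ) * √((4 - δ) ^ 2 - 8 * δ) := by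
    rw [Real.mul_self_sqrt hD, discrim]
    ring
  have hroot := (quadratic_eq_zero_iff (by positivity) hdiscrim (xStar δ)).mpr
    (Or.inr (by rw [xStar]; ring_nf))
  linear_combination hroot

lemma hDyn_sub_hDyn_of_isCritical {δ y : ℝ} (hy : 2 * δ * y ^ 2 - (4 + δ) * y + 3 = 0) (x : ℝ) :
    hDyn δ y - hDyn δ x = (x - y) ^ 2 * (1 + δ / 4 - δ * (2 * y + x) / 3) := by
  simp only [hDyn]
  linear_combination (y - x) / 2 * hy

lemma hDyn_lt_of_isCritical {δ x y : ℝ} (hδ0 : 0 ≤ δ) (hδ1 : δ ≤ 1) (hy1 : y ≤ 1) (hx1 : x ≤ 1)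
    (hy : 2 * δ * y ^ 2 - (4 + δ) * y + 3 = 0) (hxy : x ≠ y) : hDyn δ x < hDyn δ y := by
  have hsq : 0 < (x - y) ^ 2 := by
    have : x - y ≠ 0 := sub_ne_zero.mpr hxy
    positivity
  have hfactor : 0 < 1 + δ / 4 - δ * (2 * y + x) / 3 := by nlinarith
  have := hDyn_sub_hDyn_of_isCritical hy x
  nlinarith [mul_pos hsq hfactor]

/-- for every `δ ∈ (0,1)`, `h_δ` attains its maximum over `[0,1]` at the
unique point `x* = (4 + δ − √((4−δ)² − 8δ))/(4δ) ∈ (0,1)`. -/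
theorem stmt16 (δ : ℝ) (hδ : δ ∈ Set.Ioo (0:ℝ) 1) :
    xStar δ ∈ Set.Ioo (0:ℝ) 1 ∧
    ∀ x ∈ Set.Icc (0:ℝ) 1, x ≠ xStar δ → hDyn δ x < hDyn δ (xStar δ) := by
  have hmem := xStar_mem_Ioo hδ
  have hcrit := xStar_isCritical hδ.1.ne' (by nlinarith [hδ.1, hδ.2])
  exact ⟨hmem, fun x hx hxy =>
    hDyn_lt_of_isCritical hδ.1.le hδ.2.le hmem.2.le hx.2 hcrit hxy⟩
end
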